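/- arXiv:2605.31477 — 6 statements merged into one kernel-verified Lean document; each statement's English description precedes it below -/
import Mathlib

section
/- Let A:[T,∞)→(0,∞) be locally absolutely continuous and F:[T,∞)→ℝ be right-continuous and nondecreasing with A'(t)=F(t) for a.e. t≥T. Suppose F(t)>0 for all t≥T and, for some constant C>1, the inequality F(t)² dt ≤ C·A(t) dF(t) holds as Radon measures on [T,∞). Then there exists c>0 such that A(t) ≥ c·t^{C/(C-1)} for all sufficiently large t. -/
/-!
Dividing `F² dt ≤ C A dF` by `F A` gives `(F / A) dt ≤ C dF / F`. The left side integrates to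
`log A`; on the right, right-continuity of `F` gives `∫_{(s,t]} dF / F ≤ log F(t) - log F(s)`.
Hence `A / F ^ C` is nonincreasing, so `A' = F ≥ K A ^ (1/C)`, and `A ^ (1 - 1/C)` grows at least
linearly, which is `A(t) ≳ t ^ (C/(C-1))`.
-/

open MeasureTheory Set Filter

open scoped ENNReal

namespace StieltjesFunction

variable (F : StieltjesFunction ℝ)

theorem measure_le_ofReal_sub {s t c : ℝ} {W : Set ℝ} (hW : W ⊆ Ioc s t)
    (hc : ∀ u ∈ W, F u ≤ c) : F.measure W ≤ ENNReal.ofReal (c - F s) := by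
  rcases W.eq_empty_or_nonempty with h | hne
  · simp [h]
  have hbdd : BddAbove W := ⟨t, fun u hu => (hW hu).2⟩
  set r := sSup W
  have hle_r : ∀ u ∈ W, u ≤ r := fun u hu => le_csSup hbdd hu
  by_cases hr : r ∈ W
  · calc F.measure W ≤ F.measure (Ioc s r) := measure_mono fun u hu => ⟨(hW hu).1, hle_r u hu⟩
      _ = ENNReal.ofReal (F r - F s) := F.measure_Ioc s r
      _ ≤ ENNReal.ofReal (c - F s) := by gcongr; exact hc r hr
  · have hsub : W ⊆ Ioo s r := fun u hu =>
      ⟨(hW hu).1, (hle_r u hu).lt_of_ne fun h => hr (h ▸ hu)⟩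
    have hlim : Function.leftLim F r ≤ c := by
      refine le_of_tendsto (F.mono.tendsto_leftLim r) ?_
      filter_upwards [self_mem_nhdsWithin] with u (hu : u < r)
      obtain ⟨w, hw, huw⟩ := exists_lt_of_lt_csSup hne hu
      exact (F.mono huw.le).trans (hc w hw)
    calc F.measure W ≤ F.measure (Ioo s r) := measure_mono hsub
      _ = ENNReal.ofReal (Function.leftLim F r - F s) := F.measure_Ioo
      _ ≤ ENNReal.ofReal (c - F s) := by gcongr

theorem measure_preimage_inter_Ioc_le {D : Set ℝ} (hD : IsLowerSet D) (s t : ℝ) :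
    F.measure (F ⁻¹' D ∩ Ioc s t) ≤ volume (D ∩ Ioc (F s) (F t)) := by
  set W := F ⁻¹' D ∩ Ioc s t
  rcases W.eq_empty_or_nonempty with hW | hW
  · simp [hW]
  have hbdd : BddAbove (F '' W) := ⟨F t, forall_mem_image.2 fun u hu => F.mono hu.2.2⟩
  calc F.measure W ≤ ENNReal.ofReal (sSup (F '' W) - F s) :=
        F.measure_le_ofReal_sub inter_subset_right fun u hu => le_csSup hbdd (mem_image_of_mem F hu)
    _ = volume (Ioo (F s) (sSup (F '' W))) := Real.volume_Ioo.symm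
    _ ≤ volume (D ∩ Ioc (F s) (F t)) := measure_mono fun y hy => by
        obtain ⟨_, ⟨u, hu, rfl⟩, hyu⟩ := exists_lt_of_lt_csSup (hW.image F) hy.2
        exact ⟨hD hyu.le hu.1, hy.1, hyu.le.trans (F.mono hu.2.2)⟩

/-- By right-continuity the atoms of `dF` sit at the upper ends of the jumps of `F`, so the
image of `dF` under `F` lies to the right of Lebesgue measure; antitone integrands see less. -/
theorem setLIntegral_comp_le {g : ℝ → ℝ} (hg : Antitone g) (hg0 : 0 ≤ g) (s t : ℝ) :
    ∫⁻ u in Ioc s t, ENNReal.ofReal (g (F u)) ∂F.measure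
      ≤ ∫⁻ y in Ioc (F s) (F t), ENNReal.ofReal (g y) := by
  rw [lintegral_eq_lintegral_meas_le (f := fun u => g (F u)) _ (ae_of_all _ fun u => hg0 (F u))
      (hg.measurable.comp F.mono.measurable).aemeasurable,
    lintegral_eq_lintegral_meas_le _ (ae_of_all _ hg0) hg.measurable.aemeasurable]
  refine lintegral_mono fun l => ?_
  rw [Measure.restrict_apply' measurableSet_Ioc, Measure.restrict_apply' measurableSet_Ioc]
  exact F.measure_preimage_inter_Ioc_le (D := {y | l ≤ g y})
    (fun a b hab ha => ha.trans (hg hab)) s t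

end StieltjesFunction

theorem setLIntegral_inv_Ioc {a b : ℝ} (ha : 0 < a) (hab : a ≤ b) :
    ∫⁻ y in Ioc a b, ENNReal.ofReal y⁻¹ = ENNReal.ofReal (Real.log b - Real.log a) := by
  have hint : IntegrableOn (fun y : ℝ => y⁻¹) (Ioc a b) :=
    ((continuousOn_inv₀.mono fun y hy => (ha.trans_le hy.1).ne').integrableOn_Icc).mono_set
      Ioc_subset_Icc_self
  rw [← ofReal_integral_eq_lintegral_ofReal hint
      ((ae_restrict_iff' measurableSet_Ioc).2
        (ae_of_all _ fun y hy => inv_nonneg.2 (ha.trans hy.1).le)),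
    ← intervalIntegral.integral_of_le hab, integral_inv_of_pos ha (ha.trans_le hab),
    Real.log_div (ha.trans_le hab).ne' ha.ne']

theorem StieltjesFunction.setLIntegral_inv_le_log (F : StieltjesFunction ℝ) {s t : ℝ}
    (hst : s ≤ t) (hs : 0 < F s) :
    ∫⁻ u in Ioc s t, ENNReal.ofReal (F u)⁻¹ ∂F.measure
      ≤ ENNReal.ofReal (Real.log (F t) - Real.log (F s)) := by
  have hg : Antitone fun y => (max y (F s))⁻¹ := fun x y hxy =>
    inv_anti₀ (lt_max_of_lt_right hs) (max_le_max hxy le_rfl)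
  calc ∫⁻ u in Ioc s t, ENNReal.ofReal (F u)⁻¹ ∂F.measure
      = ∫⁻ u in Ioc s t, ENNReal.ofReal (max (F u) (F s))⁻¹ ∂F.measure :=
        setLIntegral_congr_fun measurableSet_Ioc fun u hu => by rw [max_eq_left (F.mono hu.1.le)]
    _ ≤ ∫⁻ y in Ioc (F s) (F t), ENNReal.ofReal (max y (F s))⁻¹ :=
        F.setLIntegral_comp_le hg (fun y => inv_nonneg.2 (hs.le.trans (le_max_right _ _))) s t
    _ = ∫⁻ y in Ioc (F s) (F t), ENNReal.ofReal y⁻¹ :=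
        setLIntegral_congr_fun measurableSet_Ioc fun y hy => by rw [max_eq_left hy.1.le]
    _ = ENNReal.ofReal (Real.log (F t) - Real.log (F s)) := setLIntegral_inv_Ioc hs (F.mono hst)

theorem lintegral_mul_le_lintegral_mul_of_forall_setLIntegral_le {α : Type*} [MeasurableSpace α]
    {μ ν : Measure α} {f h g : α → ℝ≥0∞} (hf : AEMeasurable f μ) (hh : AEMeasurable h ν)
    (hgμ : AEMeasurable g μ) (hgν : AEMeasurable g ν)
    (hfh : ∀ E, MeasurableSet E → ∫⁻ x in E, f x ∂μ ≤ ∫⁻ x in E, h x ∂ν) :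
    ∫⁻ x, f x * g x ∂μ ≤ ∫⁻ x, h x * g x ∂ν := by
  have hle : μ.withDensity f ≤ ν.withDensity h := Measure.le_iff.2 fun E hE => by
    rw [withDensity_apply _ hE, withDensity_apply _ hE]
    exact hfh E hE
  calc ∫⁻ x, f x * g x ∂μ = ∫⁻ x, g x ∂μ.withDensity f :=
        (lintegral_withDensity_eq_lintegral_mul₀ hf hgμ).symm
    _ ≤ ∫⁻ x, g x ∂ν.withDensity h := lintegral_mono' hle le_rfl
    _ = ∫⁻ x, h x * g x ∂ν := lintegral_withDensity_eq_lintegral_mul₀ hh hgν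

theorem StieltjesFunction.hasDerivWithinAt_Ici_of_sub_eq_integral (F : StieltjesFunction ℝ)
    {A : ℝ → ℝ} {x : ℝ} (hA : ∀ b, x ≤ b → A b - A x = ∫ t in x..b, F t) :
    HasDerivWithinAt A (F x) (Ici x) x := by
  have h := intervalIntegral.integral_hasDerivWithinAt_right (a := x) (b := x) (s := Ici x)
    (t := Ioi x) F.mono.intervalIntegrable
    F.mono.measurable.stronglyMeasurable.stronglyMeasurableAtFilter
    ((F.right_continuous x).mono Ioi_subset_Ici_self)
  refine (h.const_add (A x)).congr_of_mem (fun b hb => ?_) self_mem_Ici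
  linarith [hA b hb]

theorem continuousOn_Ici_of_sub_eq_integral {A f : ℝ → ℝ} {T : ℝ}
    (hf : ∀ a b, IntervalIntegrable f volume a b)
    (hA : ∀ b, T ≤ b → A b - A T = ∫ t in T..b, f t) : ContinuousOn A (Ici T) := by
  have : Continuous fun b => A T + ∫ t in T..b, f t :=
    continuous_const.add (intervalIntegral.continuous_primitive hf T)
  exact this.continuousOn.congr fun b hb => by linarith [hA b hb]

theorem setLIntegral_div_le_mul_setLIntegral_inv {C s t : ℝ} {A : ℝ → ℝ}
    {F : StieltjesFunction ℝ} (hC : 0 ≤ C) (hA : ContinuousOn A (Icc s t))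
    (hApos : ∀ u ∈ Icc s t, 0 < A u) (hFpos : 0 < F s)
    (hmeas : ∀ E : Set ℝ, MeasurableSet E → E ⊆ Ioc s t →
      ∫ u in E, F u ^ 2 ≤ C * ∫ u in E, A u ∂F.measure) :
    ∫⁻ u in Ioc s t, ENNReal.ofReal (F u / A u)
      ≤ ENNReal.ofReal C * ∫⁻ u in Ioc s t, ENNReal.ofReal (F u)⁻¹ ∂F.measure := by
  have hF : ∀ u ∈ Ioc s t, 0 < F u := fun u hu => hFpos.trans_le (F.mono hu.1.le)
  have hA' : ∀ u ∈ Ioc s t, 0 < A u := fun u hu => hApos u (Ioc_subset_Icc_self hu)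
  have hAm : ∀ μ : Measure ℝ, AEMeasurable A (μ.restrict (Ioc s t)) := fun μ =>
    (hA.mono Ioc_subset_Icc_self).aemeasurable measurableSet_Ioc
  have hgm : ∀ μ : Measure ℝ,
      AEMeasurable (fun u => ENNReal.ofReal (F u * A u)⁻¹) (μ.restrict (Ioc s t)) := fun μ =>
    ((F.mono.measurable.aemeasurable.mul (hAm μ)).inv).ennreal_ofReal
  have hset : ∀ E, MeasurableSet E →
      ∫⁻ u in E, ENNReal.ofReal (F u ^ 2) ∂volume.restrict (Ioc s t)
        ≤ ∫⁻ u in E, ENNReal.ofReal (C * A u) ∂F.measure.restrict (Ioc s t) := by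
    intro E hE
    rw [Measure.restrict_restrict hE, Measure.restrict_restrict hE]
    have hsub : E ∩ Ioc s t ⊆ Icc s t := inter_subset_right.trans Ioc_subset_Icc_self
    have hF2 : IntegrableOn (fun u => F u ^ 2) (E ∩ Ioc s t) :=
      (MonotoneOn.integrableOn_isCompact isCompact_Icc fun u hu v _ huv =>
        pow_le_pow_left₀ (hFpos.le.trans (F.mono hu.1)) (F.mono huv) 2).mono_set hsub
    have hAi : IntegrableOn A (E ∩ Ioc s t) F.measure :=
      (hA.integrableOn_compact isCompact_Icc).mono_set hsub
    rw [← ofReal_integral_eq_lintegral_ofReal hF2 (ae_of_all _ fun u => sq_nonneg _),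
      ← ofReal_integral_eq_lintegral_ofReal (hAi.const_mul C)
        ((ae_restrict_iff' (hE.inter measurableSet_Ioc)).2
          (ae_of_all _ fun u hu => mul_nonneg hC (hA' u hu.2).le)),
      integral_const_mul]
    exact ENNReal.ofReal_le_ofReal (hmeas _ (hE.inter measurableSet_Ioc) inter_subset_right)
  calc ∫⁻ u in Ioc s t, ENNReal.ofReal (F u / A u)
      = ∫⁻ u in Ioc s t, ENNReal.ofReal (F u ^ 2) * ENNReal.ofReal (F u * A u)⁻¹ :=
        setLIntegral_congr_fun measurableSet_Ioc fun u hu => by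
          rw [← ENNReal.ofReal_mul (sq_nonneg _)]
          field_simp [(hF u hu).ne', (hA' u hu).ne']
    _ ≤ ∫⁻ u in Ioc s t, ENNReal.ofReal (C * A u) * ENNReal.ofReal (F u * A u)⁻¹ ∂F.measure :=
        lintegral_mul_le_lintegral_mul_of_forall_setLIntegral_le
          (F.mono.measurable.pow_const 2).ennreal_ofReal.aemeasurable
          ((hAm _).const_mul C).ennreal_ofReal (hgm _) (hgm _) hset
    _ = ∫⁻ u in Ioc s t, ENNReal.ofReal C * ENNReal.ofReal (F u)⁻¹ ∂F.measure :=
        setLIntegral_congr_fun measurableSet_Ioc fun u hu => by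
          rw [← ENNReal.ofReal_mul (mul_nonneg hC (hA' u hu).le), ← ENNReal.ofReal_mul hC]
          field_simp [(hF u hu).ne', (hA' u hu).ne']
    _ = ENNReal.ofReal C * ∫⁻ u in Ioc s t, ENNReal.ofReal (F u)⁻¹ ∂F.measure :=
        lintegral_const_mul _ F.mono.measurable.inv.ennreal_ofReal

theorem setLIntegral_div_eq_log_sub_log {s t : ℝ} {A f : ℝ → ℝ} (hst : s ≤ t)
    (hA : ContinuousOn A (Icc s t)) (hApos : ∀ u ∈ Icc s t, 0 < A u)
    (hderiv : ∀ x ∈ Ioo s t, HasDerivWithinAt A (f x) (Ioi x) x)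
    (hf : IntervalIntegrable f volume s t) (hf0 : ∀ u ∈ Ioc s t, 0 ≤ f u) :
    ∫⁻ u in Ioc s t, ENNReal.ofReal (f u / A u)
      = ENNReal.ofReal (Real.log (A t) - Real.log (A s)) := by
  have hint : IntervalIntegrable (fun u => f u / A u) volume s t := by
    simp only [div_eq_mul_inv]
    exact hf.mul_continuousOn ((hA.inv₀ fun u hu => (hApos u hu).ne').mono (uIcc_of_le hst).le)
  have hftc : ∫ u in s..t, f u / A u = Real.log (A t) - Real.log (A s) :=
    intervalIntegral.integral_eq_sub_of_hasDeriv_right_of_le hst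
      (hA.log fun u hu => (hApos u hu).ne')
      (fun x hx => (hderiv x hx).log (hApos x (Ioo_subset_Icc_self hx)).ne') hint
  rw [← hftc, intervalIntegral.integral_of_le hst,
    ofReal_integral_eq_lintegral_ofReal ((intervalIntegrable_iff_integrableOn_Ioc_of_le hst).1 hint)
      ((ae_restrict_iff' measurableSet_Ioc).2 (ae_of_all _ fun u hu =>
        div_nonneg (hf0 u hu) (hApos u (Ioc_subset_Icc_self hu)).le))]

theorem log_sub_log_le_mul_log_sub_log {C s t : ℝ} {A : ℝ → ℝ} {F : StieltjesFunction ℝ}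
    (hC : 0 ≤ C) (hst : s ≤ t) (hA : ContinuousOn A (Icc s t))
    (hApos : ∀ u ∈ Icc s t, 0 < A u)
    (hderiv : ∀ x ∈ Ioo s t, HasDerivWithinAt A (F x) (Ioi x) x) (hFpos : 0 < F s)
    (hmeas : ∀ E : Set ℝ, MeasurableSet E → E ⊆ Ioc s t →
      ∫ u in E, F u ^ 2 ≤ C * ∫ u in E, A u ∂F.measure) :
    Real.log (A t) - Real.log (A s) ≤ C * (Real.log (F t) - Real.log (F s)) := by
  have hlogF : 0 ≤ Real.log (F t) - Real.log (F s) :=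
    sub_nonneg.2 (Real.log_le_log hFpos (F.mono hst))
  rw [← ENNReal.ofReal_le_ofReal_iff (mul_nonneg hC hlogF), ENNReal.ofReal_mul hC,
    ← setLIntegral_div_eq_log_sub_log hst hA hApos hderiv F.mono.intervalIntegrable
      fun u hu => (hFpos.trans_le (F.mono hu.1.le)).le]
  calc ∫⁻ u in Ioc s t, ENNReal.ofReal (F u / A u)
      ≤ ENNReal.ofReal C * ∫⁻ u in Ioc s t, ENNReal.ofReal (F u)⁻¹ ∂F.measure :=
        setLIntegral_div_le_mul_setLIntegral_inv hC hA hApos hFpos hmeas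
    _ ≤ ENNReal.ofReal C * ENNReal.ofReal (Real.log (F t) - Real.log (F s)) := by
        gcongr
        exact F.setLIntegral_inv_le_log hst hFpos

theorem exp_mul_rpow_inv_le_of_log_sub_log_le {C a a₀ f f₀ : ℝ} (hC : 0 < C) (ha : 0 < a)
    (hf : 0 < f) (h : Real.log a - Real.log a₀ ≤ C * (Real.log f - Real.log f₀)) :
    Real.exp (Real.log f₀ - Real.log a₀ / C) * a ^ C⁻¹ ≤ f := by
  rw [Real.rpow_def_of_pos ha, ← Real.exp_add, ← Real.exp_log hf, Real.exp_le_exp,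
    ← div_eq_mul_inv]
  have : Real.log a / C - Real.log a₀ / C ≤ Real.log f - Real.log f₀ := by
    rw [← sub_div, div_le_iff₀ hC]; linarith
  linarith

theorem mul_sub_le_rpow_sub_rpow_of_mul_rpow_le_deriv {y y' : ℝ → ℝ} {a b K q : ℝ} (hab : a ≤ b)
    (hq : q < 1) (hy : ContinuousOn y (Icc a b)) (hpos : ∀ x ∈ Icc a b, 0 < y x)
    (hderiv : ∀ x ∈ Ico a b, HasDerivWithinAt y (y' x) (Ici x) x)
    (hK : ∀ x ∈ Ico a b, K * y x ^ q ≤ y' x) :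
    (1 - q) * K * (b - a) ≤ y b ^ (1 - q) - y a ^ (1 - q) := by
  have hcomp := image_le_of_deriv_right_le_deriv_boundary
    (f := fun x => y a ^ (1 - q) + (1 - q) * K * (x - a)) (f' := fun _ => (1 - q) * K)
    (B := fun x => y x ^ (1 - q)) (B' := fun x => (1 - q) * y x ^ (1 - q - 1) * y' x)
    (by fun_prop)
    (fun x _ => (((hasDerivAt_id x).sub_const a).const_mul ((1 - q) * K)).const_add _
      |>.hasDerivWithinAt |>.congr_deriv (by ring))
    (by simp) (hy.rpow_const fun x hx => Or.inl (hpos x hx).ne')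
    (fun x hx => (Real.hasDerivAt_rpow_const
      (Or.inl (hpos x (Ico_subset_Icc_self hx)).ne')).comp_hasDerivWithinAt x (hderiv x hx))
    (fun x hx => by
      have hyx := hpos x (Ico_subset_Icc_self hx)
      have hinv : y x ^ q * y x ^ (1 - q - 1) = 1 := by
        rw [← Real.rpow_add hyx]; simp
      calc (1 - q) * K = (1 - q) * (K * y x ^ q) * y x ^ (1 - q - 1) := by
            rw [mul_assoc (1 - q), mul_assoc K, hinv, mul_one]
        _ ≤ (1 - q) * y' x * y x ^ (1 - q - 1) := by
            gcongr
            exact hK x hx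
        _ = (1 - q) * y x ^ (1 - q - 1) * y' x := by ring)
    (right_mem_Icc.2 hab)
  linarith

theorem exists_pos_eventually_mul_rpow_le {A : ℝ → ℝ} {T m β : ℝ} (hm : 0 < m) (hβ : 0 < β)
    (hApos : ∀ t, T ≤ t → 0 < A t) (h : ∀ t, T ≤ t → m * (t - T) ≤ A t ^ β) :
    ∃ c > 0, ∀ᶠ t in atTop, c * t ^ β⁻¹ ≤ A t := by
  refine ⟨(m / 2) ^ β⁻¹, by positivity, ?_⟩
  filter_upwards [eventually_ge_atTop (max (2 * T) 0)] with t ht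
  have ht0 : 0 ≤ t := le_of_max_le_right ht
  have htT : 2 * T ≤ t := le_of_max_le_left ht
  calc (m / 2) ^ β⁻¹ * t ^ β⁻¹ = (m / 2 * t) ^ β⁻¹ := (Real.mul_rpow (by positivity) ht0).symm
    _ ≤ (A t ^ β) ^ β⁻¹ := by
        gcongr
        nlinarith [h t (by linarith)]
    _ = A t := Real.rpow_rpow_inv (hApos t (by linarith)).le hβ.ne'

theorem stmt_0_general (T C : ℝ) (hC : 1 < C) (A : ℝ → ℝ) (F : StieltjesFunction ℝ)
    (hApos : ∀ t, T ≤ t → 0 < A t)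
    (hFTC : ∀ a b : ℝ, T ≤ a → a ≤ b → A b - A a = ∫ t in a..b, F t)
    (hFpos : ∀ t, T ≤ t → 0 < F t)
    (hmeas : ∀ E : Set ℝ, MeasurableSet E → E ⊆ Ici T →
      ∫ t in E, (F t) ^ 2 ≤ C * ∫ t in E, A t ∂F.measure) :
    ∃ c > 0, ∀ᶠ t in atTop, c * t ^ (C / (C - 1)) ≤ A t := by
  have hC0 : 0 < C := by linarith
  have hAcont : ContinuousOn A (Ici T) :=
    continuousOn_Ici_of_sub_eq_integral (fun _ _ => F.mono.intervalIntegrable)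
      fun b hb => hFTC T b le_rfl hb
  have hderiv : ∀ x, T ≤ x → HasDerivWithinAt A (F x) (Ici x) x := fun x hx =>
    F.hasDerivWithinAt_Ici_of_sub_eq_integral fun b hb => hFTC x b hx hb
  set K := Real.exp (Real.log (F T) - Real.log (A T) / C)
  have hFK : ∀ x, T ≤ x → K * A x ^ C⁻¹ ≤ F x :=
    fun x hx => exp_mul_rpow_inv_le_of_log_sub_log_le hC0 (hApos x hx) (hFpos x hx) <|
      log_sub_log_le_mul_log_sub_log hC0.le hx (hAcont.mono Icc_subset_Ici_self)
        (fun u hu => hApos u hu.1) (fun y hy => (hderiv y hy.1.le).mono Ioi_subset_Ici_self)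
        (hFpos T le_rfl) fun E hE hsub =>
          hmeas E hE (hsub.trans (Ioc_subset_Ioi_self.trans Ioi_subset_Ici_self))
  have hβ : 0 < 1 - C⁻¹ := sub_pos.2 (inv_lt_one_of_one_lt₀ hC)
  have hgrowth : ∀ t, T ≤ t → (1 - C⁻¹) * K * (t - T) ≤ A t ^ (1 - C⁻¹) := fun t ht => by
    have := mul_sub_le_rpow_sub_rpow_of_mul_rpow_le_deriv ht (inv_lt_one_of_one_lt₀ hC)
      (hAcont.mono Icc_subset_Ici_self) (fun u hu => hApos u hu.1)
      (fun x hx => hderiv x hx.1) fun x hx => hFK x hx.1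
    linarith [Real.rpow_nonneg (hApos T le_rfl).le (1 - C⁻¹)]
  rw [show C / (C - 1) = (1 - C⁻¹)⁻¹ by field_simp]
  exact exists_pos_eventually_mul_rpow_le (mul_pos hβ (Real.exp_pos _)) hβ hApos hgrowth

/-- if `A' = F` a.e. on `[T,∞)` (expressed via the fundamental theorem of
calculus for the locally absolutely continuous function `A`), `F` is a right-continuous
nondecreasing function (a `StieltjesFunction`) which is positive on `[T,∞)`, and the
Radon measure inequality `F(t)² dt ≤ C · A(t) dF(t)` holds on Borel subsets of `[T,∞)`
with `C > 1`, then `A(t) ≥ c · t^{C/(C-1)}` for all sufficiently large `t`. -/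
theorem stmt_0 (T C : ℝ) (hC : 1 < C) (A : ℝ → ℝ) (F : StieltjesFunction ℝ)
    (hApos : ∀ t, T ≤ t → 0 < A t)
    (hAcont : ContinuousOn A (Ici T))
    (hFTC : ∀ a b : ℝ, T ≤ a → a ≤ b → A b - A a = ∫ t in a..b, F t)
    (hFpos : ∀ t, T ≤ t → 0 < F t)
    (hmeas : ∀ E : Set ℝ, MeasurableSet E → E ⊆ Ici T →
      ∫ t in E, (F t) ^ 2 ≤ C * ∫ t in E, A t ∂F.measure) :
    ∃ c > 0, ∀ᶠ t in atTop, c * t ^ (C / (C - 1)) ≤ A t :=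
  stmt_0_general T C hC A F hApos hFTC hFpos hmeas
end

section
/- Let A:[T,∞)→(0,∞) be locally absolutely continuous and F:[T,∞)→ℝ be right-continuous and nondecreasing with A'(t)=t^{n-3}F(t) for a.e. t≥T (where n≥3 is a fixed integer). Suppose F(T)>0 and the inequality F dA ≤ 2A dF holds as Radon measures on [T,∞). Then there exists c>0 such that A(t) ≥ c·t^{2n-4} for all sufficiently large t. -/
open MeasureTheory Set Filter

/-!
Formally, `F dA ≤ 2 A dF` says that `A / F²` is nonincreasing. Since `F` may jump, this is
proved discretely. Let `τ₀ = t₀ = max T 1` and let `τ_{j+1}` be the first time `F` reaches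
`(1 + ε_j) F(τ_j)`. Up to the next crossing, the inequality on `(τ_j, t]` gives
`(1 - 2ε_j) A(t) ≤ A(τ_j)`, so `A / F²` grows by at most the factor
`1 / ((1 - 2ε_j)(1 + ε_j)²) = 1 + O(ε_j²)` per step. With `ε_j ≍ 1/j` the product of these factors
stays bounded, while `∑ ε_j = ∞` forces `τ_j → ∞`; hence `A ≤ K F²` on `[t₀, ∞)`.
Then `A' = t^{n-3} F ≥ t^{n-3} √(A / K)`, and integrating over dyadic scales,
`A(2t) ≥ A(t) + t^{n-2} √(A(t) / K)`, gives `A(t) ≳ t^{2n-4}`.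
-/

theorem exists_le_lt_succ_of_le_of_lt {α : Type*} [LinearOrder α] {τ : ℕ → α} {t : α}
    (h₀ : τ 0 ≤ t) {N : ℕ} (hN : t < τ N) : ∃ j, τ j ≤ t ∧ t < τ (j + 1) := by
  induction N with
  | zero => exact absurd hN h₀.not_gt
  | succ N ih => exact (lt_or_ge t (τ N)).elim ih fun h ↦ ⟨N, h, hN⟩

section Dyadic

variable {g : ℝ → ℝ} {t₀ κ : ℝ} {m : ℕ}

theorem mul_pow_le_apply_mul_two_pow {δ : ℝ} (ht₀ : 0 ≤ t₀) (hκ : 0 ≤ κ) (hδ : 0 ≤ δ)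
    (hδg : δ ≤ g t₀) (hδκ : δ * (4 ^ m - 1) ≤ κ * t₀ ^ m * √δ)
    (hstep : ∀ t, t₀ ≤ t → g t + κ * t ^ m * √(g t) ≤ g (2 * t)) (k : ℕ) :
    δ * (4 ^ m) ^ k ≤ g (t₀ * 2 ^ k) := by
  induction k with
  | zero => simpa only [pow_zero, mul_one] using hδg
  | succ k ih =>
    have h4 : (4 : ℝ) ^ m = (2 ^ m) ^ 2 := by rw [← pow_mul, mul_comm, pow_mul]; norm_num
    have hsqrt : √(δ * ((4 : ℝ) ^ m) ^ k) = √δ * (2 ^ m) ^ k := by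
      rw [Real.sqrt_mul hδ, h4, ← pow_mul, mul_comm 2 k, pow_mul, Real.sqrt_sq (by positivity)]
    calc δ * ((4 : ℝ) ^ m) ^ (k + 1) = δ * (4 ^ m) ^ k + δ * (4 ^ m - 1) * (4 ^ m) ^ k := by ring
      _ ≤ δ * (4 ^ m) ^ k + κ * t₀ ^ m * √δ * (4 ^ m) ^ k := by gcongr
      _ = δ * (4 ^ m) ^ k + κ * (t₀ * 2 ^ k) ^ m * √(δ * (4 ^ m) ^ k) := by
        rw [hsqrt, h4]; ring
      _ ≤ g (t₀ * 2 ^ k) + κ * (t₀ * 2 ^ k) ^ m * √(g (t₀ * 2 ^ k)) := by gcongr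
      _ ≤ g (t₀ * 2 ^ (k + 1)) := by
        rw [pow_succ, ← mul_assoc, mul_comm _ (2 : ℝ)]
        exact hstep _ (le_mul_of_one_le_right ht₀ (one_le_pow₀ one_le_two))

theorem exists_mul_pow_le_of_add_mul_sqrt_le (ht₀ : 0 < t₀) (hκ : 0 < κ) (hg₀ : 0 < g t₀)
    (hmono : MonotoneOn g (Ici t₀))
    (hstep : ∀ t, t₀ ≤ t → g t + κ * t ^ m * √(g t) ≤ g (2 * t)) :
    ∃ c > 0, ∀ t, t₀ ≤ t → c * t ^ (2 * m) ≤ g t := by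
  set q : ℝ := 4 ^ m
  set δ := min (g t₀) ((κ * t₀ ^ m / q) ^ 2)
  have hδ : 0 < δ := lt_min hg₀ (by positivity)
  have hδκ : δ * (q - 1) ≤ κ * t₀ ^ m * √δ := by
    have hsqrt : √δ * q ≤ κ * t₀ ^ m :=
      (le_div_iff₀ (by positivity)).1 (Real.sqrt_le_iff.2 ⟨by positivity, min_le_right _ _⟩)
    calc δ * (q - 1) ≤ √δ * (√δ * q) := by
          rw [← mul_assoc, Real.mul_self_sqrt hδ.le]; linarith
      _ ≤ κ * t₀ ^ m * √δ := by rw [mul_comm _ √δ]; gcongr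
  have hdyadic := mul_pow_le_apply_mul_two_pow ht₀.le hκ.le hδ.le (min_le_left _ _) hδκ hstep
  refine ⟨δ / (q * t₀ ^ (2 * m)), by positivity, fun t ht ↦ ?_⟩
  obtain ⟨k, hk, hk'⟩ := exists_nat_pow_near ((one_le_div ht₀).2 ht) one_lt_two
  rw [le_div_iff₀ ht₀, mul_comm] at hk
  rw [div_lt_iff₀ ht₀, mul_comm] at hk'
  calc δ / (q * t₀ ^ (2 * m)) * t ^ (2 * m)
      ≤ δ / (q * t₀ ^ (2 * m)) * (t₀ * 2 ^ (k + 1)) ^ (2 * m) := by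
        gcongr; exact ht₀.le.trans ht
    _ = δ * q ^ k := by
      have h4 : (2 : ℝ) ^ (2 * m) = q := by rw [pow_mul]; norm_num [q]
      have hq : q ≠ 0 := by positivity
      rw [mul_pow, ← pow_mul, mul_comm (k + 1), pow_mul (2 : ℝ) (2 * m), h4]
      field_simp
      ring
    _ ≤ g (t₀ * 2 ^ k) := hdyadic k
    _ ≤ g t := hmono (le_mul_of_one_le_right ht₀.le (one_le_pow₀ one_le_two)) ht hk

end Dyadic

noncomputable def firstCrossing (F : ℝ → ℝ) (c : ℝ) : ℝ := sInf {x | c ≤ F x}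

theorem StieltjesFunction.isLeast_firstCrossing (F : StieltjesFunction ℝ) {c : ℝ}
    (hc : ∃ x, c ≤ F x) (hlow : ∃ x, F x < c) :
    IsLeast {x | c ≤ F x} (firstCrossing F c) := by
  obtain ⟨a, ha⟩ := hlow
  have hbdd : BddBelow {x | c ≤ F x} :=
    ⟨a, fun x hx ↦ le_of_not_gt fun hxa ↦ (ha.trans_le hx).not_ge (F.mono hxa.le)⟩
  refine ⟨?_, fun x hx ↦ csInf_le hbdd hx⟩
  refine ge_of_tendsto
    ((F.right_continuous _).mono_left (nhdsWithin_mono _ Ioi_subset_Ici_self)) ?_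
  filter_upwards [self_mem_nhdsWithin] with x hx
  obtain ⟨y, hy, hyx⟩ := exists_lt_of_csInf_lt hc hx
  exact le_trans hy (F.mono hyx.le)

noncomputable def crossingSeq (F : ℝ → ℝ) (ε : ℕ → ℝ) (t₀ : ℝ) : ℕ → ℝ
  | 0 => t₀
  | j + 1 => firstCrossing F ((1 + ε j) * F (crossingSeq F ε t₀ j))

theorem one_sub_two_mul_le_of_mul_sub_le {Fa Fb Aa Ab ε : ℝ} (hFa : 0 < Fa) (hAb : 0 ≤ Ab)
    (h : Fa * (Ab - Aa) ≤ 2 * (Ab * (Fb - Fa))) (hFb : Fb ≤ (1 + ε) * Fa) :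
    (1 - 2 * ε) * Ab ≤ Aa := by
  have : Fa * (Ab - Aa) ≤ Fa * (2 * ε * Ab) := by nlinarith
  nlinarith [le_of_mul_le_mul_left this hFa]

section Crossing

variable {F : StieltjesFunction ℝ} {A : ℝ → ℝ} {t₀ : ℝ}

theorem firstCrossing_spec {a s ε : ℝ} (hs : s = firstCrossing F ((1 + ε) * F a))
    (ha : t₀ ≤ a) (hFa : 0 < F a) (hε : 0 < ε) (hε' : ε < 1 / 2)
    (hA : ContinuousOn A (Ici t₀)) (hA_top : Tendsto A atTop atTop)
    (hstep : ∀ x, a ≤ x → F x ≤ (1 + ε) * F a → (1 - 2 * ε) * A x ≤ A a) :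
    a < s ∧ (∀ x ∈ Ico a s, (1 - 2 * ε) * A x ≤ A a) ∧ (1 + ε) * F a ≤ F s ∧
      (1 - 2 * ε) * A s ≤ A a := by
  have hlt : F a < (1 + ε) * F a := by nlinarith
  have hreach : ∃ x, (1 + ε) * F a ≤ F x := by
    by_contra! h
    obtain ⟨x, hx, hax⟩ :=
      ((hA_top.eventually_gt_atTop (A a / (1 - 2 * ε))).and (eventually_ge_atTop a)).exists
    rw [div_lt_iff₀' (by linarith)] at hx
    linarith [hstep x hax (h x).le]
  have hleast := hs ▸ F.isLeast_firstCrossing hreach ⟨a, hlt⟩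
  have hbelow : ∀ x ∈ Ico a s, (1 - 2 * ε) * A x ≤ A a := fun x hx ↦
    hstep x hx.1 (le_of_not_ge fun h ↦ hx.2.not_ge (hleast.2 h))
  have has : a < s := lt_of_not_ge fun h ↦ hlt.not_ge (hleast.1.trans (F.mono h))
  refine ⟨has, hbelow, hleast.1, ?_⟩
  -- `F` may jump at `s`, so the bound at `s` comes from the continuity of `A` from the left.
  have hAs : ContinuousWithinAt (fun x ↦ (1 - 2 * ε) * A x) (Ioo a s) s :=
    ((hA.continuousWithinAt (ha.trans has.le)).mono
      (Ioo_subset_Ioi_self.trans (Ioi_subset_Ici ha))).const_mul _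
  have := right_nhdsWithin_Ioo_neBot has
  exact le_of_tendsto hAs (eventually_nhdsWithin_of_forall fun x hx ↦ hbelow x ⟨hx.1.le, hx.2⟩)

end Crossing

noncomputable def levelStep (j : ℕ) : ℝ := 1 / (4 * (j + 2))

theorem levelStep_pos (j : ℕ) : 0 < levelStep j := by unfold levelStep; positivity

theorem levelStep_le (j : ℕ) : levelStep j ≤ 1 / 8 := by
  unfold levelStep
  rw [div_le_div_iff₀ (by positivity) (by norm_num)]
  linarith [(Nat.cast_nonneg j : (0 : ℝ) ≤ j)]

theorem div_le_div_mul_levelStep (j : ℕ) :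
    ((j : ℝ) + 1) / (j + 2) ≤
      (j + 2) / (j + 3) * ((1 - 2 * levelStep j) * (1 + levelStep j) ^ 2) := by
  have hj : (0 : ℝ) ≤ j := Nat.cast_nonneg j
  unfold levelStep
  rw [div_le_iff₀ (by positivity)]
  field_simp
  ring_nf
  nlinarith [mul_nonneg hj (mul_nonneg hj hj), mul_nonneg hj hj]

theorem tendsto_sum_levelStep :
    Tendsto (fun j ↦ ∑ i ∈ Finset.range j, levelStep i) atTop atTop := by
  refine tendsto_atTop_mono (fun j ↦ ?_)
    (Real.tendsto_sum_range_one_div_nat_succ_atTop.const_mul_atTop (by norm_num : (0 : ℝ) < 1 / 8))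
  rw [Finset.mul_sum]
  refine Finset.sum_le_sum fun i _ ↦ ?_
  unfold levelStep
  rw [div_mul_div_comm, one_mul, div_le_div_iff₀ (by positivity) (by positivity)]
  linarith [(Nat.cast_nonneg i : (0 : ℝ) ≤ i)]

theorem le_mul_sq_of_le_mul_sq {j : ℕ} {u Fa Fs Aa As : ℝ} (hu : 0 ≤ u) (hFa : 0 ≤ Fa)
    (hA : (1 - 2 * levelStep j) * As ≤ Aa) (hF : (1 + levelStep j) * Fa ≤ Fs)
    (h : Aa ≤ 2 * ((j + 1) / (j + 2)) * u * Fa ^ 2) :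
    As ≤ 2 * ((j + 2) / (j + 3)) * u * Fs ^ 2 := by
  have hε := levelStep_pos j
  refine le_of_mul_le_mul_left ?_ (by linarith [levelStep_le j] : 0 < 1 - 2 * levelStep j)
  calc (1 - 2 * levelStep j) * As ≤ 2 * ((j + 1) / (j + 2)) * u * Fa ^ 2 := hA.trans h
    _ ≤ 2 * ((j + 2) / (j + 3) * ((1 - 2 * levelStep j) * (1 + levelStep j) ^ 2)) * u *
        Fa ^ 2 := by gcongr; exact div_le_div_mul_levelStep j
    _ = (1 - 2 * levelStep j) * (2 * ((j + 2) / (j + 3)) * u * ((1 + levelStep j) * Fa) ^ 2) := by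
        ring
    _ ≤ (1 - 2 * levelStep j) * (2 * ((j + 2) / (j + 3)) * u * Fs ^ 2) := by
        gcongr
        linarith [levelStep_le j]

section LevelCrossings

variable {F : StieltjesFunction ℝ} {A : ℝ → ℝ} {t₀ : ℝ}

theorem crossingSeq_levelStep_spec (hF : 0 < F t₀) (hA₀ : 0 ≤ A t₀) (hA : ContinuousOn A (Ici t₀))
    (hA_top : Tendsto A atTop atTop)
    (hstep : ∀ ε a x, t₀ ≤ a → a ≤ x → F x ≤ (1 + ε) * F a → (1 - 2 * ε) * A x ≤ A a)
    (j : ℕ) :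
    t₀ ≤ crossingSeq F levelStep t₀ j ∧
      F t₀ * (1 + ∑ i ∈ Finset.range j, levelStep i) ≤ F (crossingSeq F levelStep t₀ j) ∧
      A (crossingSeq F levelStep t₀ j) ≤
        2 * ((j + 1) / (j + 2)) * (A t₀ / F t₀ ^ 2) * F (crossingSeq F levelStep t₀ j) ^ 2 := by
  set τ := crossingSeq F levelStep t₀
  set u := A t₀ / F t₀ ^ 2
  induction j with
  | zero =>
    refine ⟨le_rfl, by simp [τ, crossingSeq], le_of_eq ?_⟩
    simp only [τ, crossingSeq, u]
    field_simp
    norm_num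
  | succ j ih =>
    obtain ⟨hτ, hFτ, hAτ⟩ := ih
    have hε := levelStep_pos j
    have hε' := levelStep_le j
    have hsum : 0 ≤ ∑ i ∈ Finset.range j, levelStep i :=
      Finset.sum_nonneg fun i _ ↦ (levelStep_pos i).le
    have hFτ₀ : F t₀ ≤ F (τ j) := by nlinarith
    obtain ⟨hlt, -, hF_succ, hA_succ⟩ :=
      firstCrossing_spec (a := τ j) (s := τ (j + 1)) rfl hτ (hF.trans_le hFτ₀) hε
      (by linarith) hA hA_top (hstep _ _ · hτ)
    have hu : 0 ≤ u := by positivity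
    refine ⟨hτ.trans hlt.le, ?_, ?_⟩
    · rw [Finset.sum_range_succ]
      nlinarith
    · convert le_mul_sq_of_le_mul_sq hu (hF.trans_le hFτ₀).le hA_succ hF_succ hAτ using 4
      push_cast
      ring

theorem le_mul_sq_of_mul_sub_le (hF : 0 < F t₀) (hA : ContinuousOn A (Ici t₀))
    (hA₀ : ∀ t, t₀ ≤ t → 0 ≤ A t) (hA_top : Tendsto A atTop atTop)
    (hstar : ∀ a b, t₀ ≤ a → a ≤ b → F a * (A b - A a) ≤ 2 * (A b * (F b - F a)))
    {t : ℝ} (ht : t₀ ≤ t) : A t ≤ 3 * (A t₀ / F t₀ ^ 2) * F t ^ 2 := by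
  have hstep (ε a x : ℝ) (ha : t₀ ≤ a) (hax : a ≤ x) (hFx : F x ≤ (1 + ε) * F a) :
      (1 - 2 * ε) * A x ≤ A a :=
    one_sub_two_mul_le_of_mul_sub_le (hF.trans_le (F.mono ha)) (hA₀ x (ha.trans hax))
      (hstar a x ha hax) hFx
  set τ := crossingSeq F levelStep t₀
  have hspec := crossingSeq_levelStep_spec hF (hA₀ t₀ le_rfl) hA hA_top hstep
  obtain ⟨N, hN⟩ : ∃ N, t < τ N := by
    by_contra! h
    obtain ⟨j, hj⟩ := (tendsto_sum_levelStep.eventually_gt_atTop (F t / F t₀)).exists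
    rw [div_lt_iff₀ hF] at hj
    nlinarith [(hspec j).2.1, F.mono (h j)]
  obtain ⟨j, hjt, htj⟩ := exists_le_lt_succ_of_le_of_lt ht hN
  obtain ⟨hτ, -, hAτ⟩ := hspec j
  have hε := levelStep_le j
  obtain ⟨-, hbelow, -, -⟩ := firstCrossing_spec (s := τ (j + 1)) rfl hτ (hF.trans_le (F.mono hτ))
    (levelStep_pos j) (by linarith) hA hA_top (hstep _ _ · hτ)
  have hθ : ((j : ℝ) + 1) / (j + 2) ≤ 1 := div_le_one_of_le₀ (by linarith) (by positivity)
  have hFτ : 0 ≤ F (τ j) := (hF.trans_le (F.mono hτ)).le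
  have hu : 0 ≤ A t₀ / F t₀ ^ 2 := div_nonneg (hA₀ t₀ le_rfl) (by positivity)
  calc A t ≤ 4 / 3 * ((1 - 2 * levelStep j) * A t) := by nlinarith [hA₀ t ht]
    _ ≤ 4 / 3 * A (τ j) := by gcongr; exact hbelow t ⟨hjt, htj⟩
    _ ≤ 4 / 3 * (2 * ((j + 1) / (j + 2)) * (A t₀ / F t₀ ^ 2) * F (τ j) ^ 2) := by gcongr
    _ ≤ 4 / 3 * (2 * 1 * (A t₀ / F t₀ ^ 2) * F t ^ 2) := by gcongr
    _ ≤ 3 * (A t₀ / F t₀ ^ 2) * F t ^ 2 := by nlinarith [sq_nonneg (F t)]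

end LevelCrossings

section Discrete

variable {F : StieltjesFunction ℝ} {A : ℝ → ℝ} {t₀ : ℝ} {p : ℕ}

theorem monotoneOn_of_add_pow_mul_le (ht₀ : 0 ≤ t₀) (hF : 0 ≤ F t₀)
    (hgrowth : ∀ a b, t₀ ≤ a → a ≤ b → A a + a ^ p * F a * (b - a) ≤ A b) :
    MonotoneOn A (Ici t₀) := fun a ha b _ hab ↦ by
  have : 0 ≤ a ^ p * F a * (b - a) :=
    mul_nonneg (mul_nonneg (pow_nonneg (ht₀.trans ha) _) (hF.trans (F.mono ha)))
      (sub_nonneg.2 hab)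
  linarith [hgrowth a b ha hab]

theorem exists_mul_pow_le_of_mul_sub_le (ht₀ : 0 < t₀) (hF : 0 < F t₀)
    (hA : ContinuousOn A (Ici t₀)) (hA₀ : ∀ t, t₀ ≤ t → 0 < A t)
    (hgrowth : ∀ a b, t₀ ≤ a → a ≤ b → A a + a ^ p * F a * (b - a) ≤ A b)
    (hstar : ∀ a b, t₀ ≤ a → a ≤ b → F a * (A b - A a) ≤ 2 * (A b * (F b - F a))) :
    ∃ c > 0, ∀ t, t₀ ≤ t → c * t ^ (2 * (p + 1)) ≤ A t := by
  have hA_top : Tendsto A atTop atTop :=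
    tendsto_atTop_mono' _ ((eventually_ge_atTop t₀).mono fun t ht ↦ hgrowth t₀ t le_rfl ht)
      (tendsto_atTop_add_const_left _ _
        ((tendsto_atTop_add_const_right _ _ tendsto_id).const_mul_atTop (by positivity)))
  set K := 3 * (A t₀ / F t₀ ^ 2)
  have hK : 0 < K := by have := hA₀ t₀ le_rfl; positivity
  refine exists_mul_pow_le_of_add_mul_sqrt_le ht₀ (by positivity : 0 < 1 / √K) (hA₀ t₀ le_rfl)
    (monotoneOn_of_add_pow_mul_le ht₀.le hF.le hgrowth) fun t ht ↦ ?_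
  have hquad : A t ≤ K * F t ^ 2 :=
    le_mul_sq_of_mul_sub_le hF hA (fun s hs ↦ (hA₀ s hs).le) hA_top hstar ht
  have hsqrt : 1 / √K * √(A t) ≤ F t := by
    rw [one_div_mul_eq_div, ← Real.sqrt_div' _ hK.le]
    exact Real.sqrt_le_iff.2 ⟨(hF.trans_le (F.mono ht)).le, by rw [div_le_iff₀ hK]; linarith⟩
  have ht0 : 0 ≤ t := ht₀.le.trans ht
  calc A t + 1 / √K * t ^ (p + 1) * √(A t) = A t + t ^ p * (1 / √K * √(A t)) * t := by ring
    _ ≤ A t + t ^ p * F t * (2 * t - t) := by rw [two_mul, add_sub_cancel_right]; gcongr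
    _ ≤ A (2 * t) := hgrowth t (2 * t) ht (by linarith)

end Discrete

section Integrals

variable {F : StieltjesFunction ℝ} {A : ℝ → ℝ} {a b : ℝ} {p : ℕ}

theorem StieltjesFunction.monotoneOn_pow_mul (F : StieltjesFunction ℝ) (p : ℕ) (ha : 0 ≤ a)
    (hFa : 0 ≤ F a) : MonotoneOn (fun t ↦ t ^ p * F t) (Ici a) :=
  MonotoneOn.mul (fun _ hx _ _ hxy ↦ pow_le_pow_left₀ (ha.trans hx) hxy p) (F.mono.monotoneOn _)
    (fun _ hx ↦ pow_nonneg (ha.trans hx) p) (fun _ hx ↦ hFa.trans (F.mono hx))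

theorem add_pow_mul_le_of_sub_eq_integral (ha : 0 ≤ a) (hFa : 0 ≤ F a) (hab : a ≤ b)
    (hA : A b - A a = ∫ t in a..b, t ^ p * F t) : A a + a ^ p * F a * (b - a) ≤ A b := by
  have hmono := F.monotoneOn_pow_mul p ha hFa
  have hint : IntervalIntegrable (fun t ↦ t ^ p * F t) volume a b :=
    (hmono.mono (by simp [uIcc_of_le hab, Icc_subset_Ici_self])).intervalIntegrable
  have := intervalIntegral.integral_mono_on hab intervalIntegrable_const hint
    fun t ht ↦ hmono self_mem_Ici ht.1 ht.1
  rw [intervalIntegral.integral_const, smul_eq_mul, ← hA] at this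
  linarith

theorem mul_sub_le_two_mul_of_setIntegral_le (ha : 0 ≤ a) (hFa : 0 < F a) (hab : a ≤ b)
    (hA : A b - A a = ∫ t in a..b, t ^ p * F t) (hA₀ : 0 ≤ A a) (hAmono : MonotoneOn A (Icc a b))
    (hmeas : ∫ t in Ioc a b, F t * (t ^ p * F t) ≤ 2 * ∫ t in Ioc a b, A t ∂F.measure) :
    F a * (A b - A a) ≤ 2 * (A b * (F b - F a)) := by
  have hIoc {f : ℝ → ℝ} (hf : MonotoneOn f (Ici a)) : IntegrableOn f (Ioc a b) :=
    ((hf.mono Icc_subset_Ici_self).integrableOn_isCompact isCompact_Icc).mono_set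
      Ioc_subset_Icc_self
  have hF₀ (t : ℝ) (ht : a ≤ t) : 0 ≤ F t := hFa.le.trans (F.mono ht)
  have hmono := F.monotoneOn_pow_mul p ha hFa.le
  have hlower : F a * (A b - A a) ≤ ∫ t in Ioc a b, F t * (t ^ p * F t) := by
    rw [hA, intervalIntegral.integral_of_le hab, ← integral_const_mul]
    refine setIntegral_mono_on ((hIoc hmono).const_mul _)
      (hIoc ((F.mono.monotoneOn _).mul hmono hF₀ fun t ht ↦ mul_nonneg
        (pow_nonneg (ha.trans ht) p) (hF₀ t ht))) measurableSet_Ioc fun t ht ↦ ?_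
    exact mul_le_mul_of_nonneg_right (F.mono ht.1.le)
      (mul_nonneg (pow_nonneg (ha.trans ht.1.le) p) (hF₀ t ht.1.le))
  -- A norm bound, which needs no integrability of `A` against `dF`.
  have hupper : ∫ t in Ioc a b, A t ∂F.measure ≤ A b * (F b - F a) := by
    have hAt {t} (ht : t ∈ Ioc a b) : ‖A t‖ ≤ A b := by
      rw [Real.norm_eq_abs, abs_of_nonneg (hA₀.trans
        (hAmono ⟨le_rfl, hab⟩ (Ioc_subset_Icc_self ht) ht.1.le))]
      exact hAmono (Ioc_subset_Icc_self ht) ⟨hab, le_rfl⟩ ht.2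
    have := norm_setIntegral_le_of_norm_le_const (μ := F.measure) (by simp [F.measure_Ioc])
      fun t ht ↦ hAt ht
    rw [measureReal_def, F.measure_Ioc, ENNReal.toReal_ofReal (sub_nonneg.2 (F.mono hab))] at this
    exact (le_abs_self _).trans this
  linarith

end Integrals

theorem stmt_1_general (n : ℕ) (T : ℝ) (A : ℝ → ℝ) (F : StieltjesFunction ℝ)
    (hApos : ∀ t, T ≤ t → 0 < A t)
    (hAcont : ContinuousOn A (Ici T))
    (hFTC : ∀ a b : ℝ, T ≤ a → a ≤ b → A b - A a = ∫ t in a..b, t ^ (n - 3) * F t)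
    (hFT : 0 < F T)
    (hmeas : ∀ E : Set ℝ, MeasurableSet E → E ⊆ Ici T →
      ∫ t in E, F t * (t ^ (n - 3) * F t) ≤ 2 * ∫ t in E, A t ∂F.measure) :
    ∃ c > 0, ∀ᶠ t in atTop, c * t ^ (2 * n - 4) ≤ A t := by
  set t₀ := max T 1
  have hTt₀ : T ≤ t₀ := le_max_left _ _
  have ht₀ : 1 ≤ t₀ := le_max_right _ _
  have hF (t : ℝ) (ht : t₀ ≤ t) : 0 < F t := hFT.trans_le (F.mono (hTt₀.trans ht))
  have hgrowth (a b : ℝ) (ha : t₀ ≤ a) (hab : a ≤ b) :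
      A a + a ^ (n - 3) * F a * (b - a) ≤ A b :=
    add_pow_mul_le_of_sub_eq_integral (by linarith) (hF a ha).le hab (hFTC a b (hTt₀.trans ha) hab)
  have hAmono := monotoneOn_of_add_pow_mul_le (by linarith) (hF t₀ le_rfl).le hgrowth
  have hstar (a b : ℝ) (ha : t₀ ≤ a) (hab : a ≤ b) :
      F a * (A b - A a) ≤ 2 * (A b * (F b - F a)) :=
    mul_sub_le_two_mul_of_setIntegral_le (by linarith) (hF a ha) hab
      (hFTC a b (hTt₀.trans ha) hab) (hApos a (hTt₀.trans ha)).le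
      (hAmono.mono (Icc_subset_Ici_iff hab |>.2 ha))
      (hmeas _ measurableSet_Ioc fun t ht ↦ hTt₀.trans (ha.trans ht.1.le))
  obtain ⟨c, hc, hAc⟩ := exists_mul_pow_le_of_mul_sub_le (by linarith) (hF t₀ le_rfl)
    (hAcont.mono (Ici_subset_Ici.2 hTt₀)) (fun t ht ↦ hApos t (hTt₀.trans ht)) hgrowth hstar
  refine ⟨c, hc, eventually_atTop.2 ⟨t₀, fun t ht ↦ ?_⟩⟩
  calc c * t ^ (2 * n - 4) ≤ c * t ^ (2 * (n - 3 + 1)) := by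
        gcongr
        · linarith
        · omega
    _ ≤ A t := hAc t ht

/-- if `A'(t) = t^{n-3} F(t)` a.e. on `[T,∞)` (via the fundamental theorem
of calculus), `F` is a right-continuous nondecreasing function with `F(T) > 0`, and the
Radon measure inequality `F dA ≤ 2 A dF` holds on Borel subsets of `[T,∞)`, then
`A(t) ≥ c · t^{2n-4}` for all sufficiently large `t`. -/
theorem stmt_1 (n : ℕ) (hn : 3 ≤ n) (T : ℝ) (A : ℝ → ℝ) (F : StieltjesFunction ℝ)
    (hApos : ∀ t, T ≤ t → 0 < A t)
    (hAcont : ContinuousOn A (Ici T))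
    (hFTC : ∀ a b : ℝ, T ≤ a → a ≤ b → A b - A a = ∫ t in a..b, t ^ (n - 3) * F t)
    (hFT : 0 < F T)
    (hmeas : ∀ E : Set ℝ, MeasurableSet E → E ⊆ Ici T →
      ∫ t in E, F t * (t ^ (n - 3) * F t) ≤ 2 * ∫ t in E, A t ∂F.measure) :
    ∃ c > 0, ∀ᶠ t in atTop, c * t ^ (2 * n - 4) ≤ A t :=
  stmt_1_general n T A F hApos hAcont hFTC hFT hmeas
end

section
/- Let h: [0,l] → (0,∞) with l ≤ 1 be such that h^{1/(n-1)} is concave (n ≥ 2 an integer) and (h^{1/(n-1)})'(0+) ≤ −h(0)^{1/(n-1)}. Then h(t) ≤ (1−t)^{n-1} h(0) for all t ∈ [0,l]. -/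
open Set

/-- if `h : [0,l] → (0,∞)`, `l ≤ 1`, is such that `h^{1/(n-1)}` is concave
(`n ≥ 2`) with right derivative at `0` at most `-h(0)^{1/(n-1)}`, then
`h(t) ≤ (1-t)^{n-1} h(0)` on `[0,l]`. -/
theorem stmt_4 (n : ℕ) (hn : 2 ≤ n) (l : ℝ) (hl0 : 0 ≤ l) (hl : l ≤ 1)
    (h : ℝ → ℝ) (hpos : ∀ t ∈ Icc 0 l, 0 < h t)
    (hconc : ConcaveOn ℝ (Icc 0 l) (fun t => h t ^ (((n : ℝ) - 1)⁻¹)))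
    (d : ℝ) (hd : HasDerivWithinAt (fun t => h t ^ (((n : ℝ) - 1)⁻¹)) d (Icc 0 l) 0)
    (hdle : d ≤ -(h 0 ^ (((n : ℝ) - 1)⁻¹))) :
    ∀ t ∈ Icc 0 l, h t ≤ (1 - t) ^ (n - 1) * h 0 := by
  intro t ht
  set a : ℝ := ((n : ℝ) - 1)⁻¹ with ha
  have hn1 : (1:ℝ) ≤ (n:ℝ) - 1 := by
    have : (2:ℝ) ≤ (n:ℝ) := by exact_mod_cast hn
    linarith
  have hne : (n:ℝ) - 1 ≠ 0 := by linarith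
  have h0mem : (0:ℝ) ∈ Icc 0 l := ⟨le_refl 0, hl0⟩
  have hpos0 : 0 < h 0 := hpos 0 h0mem
  have hpost : 0 < h t := hpos t ht
  have hf0 : (0:ℝ) < h 0 ^ a := Real.rpow_pos_of_pos hpos0 a
  have hft : (0:ℝ) < h t ^ a := Real.rpow_pos_of_pos hpost a
  have key : h t ^ a ≤ (1 - t) * h 0 ^ a := by
    rcases eq_or_lt_of_le ht.1 with h0 | h0
    · rw [← h0]; norm_num
    · have hs := hconc.neg.le_slope_of_hasDerivWithinAt h0mem ht h0 hd.neg
      rw [slope_def_field] at hs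
      simp only [Pi.neg_apply] at hs
      have ht0 : (0:ℝ) < t := h0
      rw [sub_zero, le_div_iff₀ ht0] at hs
      nlinarith [hs, hdle, hf0.le, ht0]
  have hw : (0:ℝ) ≤ (1 - t) := by
    by_contra hc
    push_neg at hc
    nlinarith [key, hft, hf0]
  have hpow : h t = (h t ^ a) ^ ((n:ℝ) - 1) := by
    rw [ha, Real.rpow_inv_rpow hpost.le hne]
  have hpow0 : (h 0 ^ a) ^ ((n:ℝ) - 1) = h 0 := Real.rpow_inv_rpow hpos0.le hne
  calc h t = (h t ^ a) ^ ((n:ℝ) - 1) := hpow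
    _ ≤ ((1 - t) * h 0 ^ a) ^ ((n:ℝ) - 1) :=
        Real.rpow_le_rpow hft.le key (by linarith)
    _ = (1 - t) ^ ((n:ℝ) - 1) * h 0 := by
        rw [Real.mul_rpow hw hf0.le, hpow0]
    _ = (1 - t) ^ (n - 1) * h 0 := by
        congr 1
        have : ((n:ℝ) - 1) = ((n - 1 : ℕ) : ℝ) := by
          have := Nat.cast_sub (by omega : 1 ≤ n) (R := ℝ)
          simp [this]
        rw [this, Real.rpow_natCast]
end

section
/- Let h:[0,l]→(0,∞) with l ≤ 1 be such that h^{1/(n-1)} is concave and h(t) ≤ (1−t)^{n-1} h(0) for all t. Then for 0 ≤ s ≤ t ≤ l one has h(t)(1−t)^{1-n} ≤ h(s)(1−s)^{1-n}, i.e., t ↦ h(t)/(1−t)^{n-1} is nonincreasing on [0,l). -/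
open Set

/-- if `h : [0,l] → (0,∞)`, `l ≤ 1`, is such that `h^{1/(n-1)}` is concave
and `h(t) ≤ (1-t)^{n-1} h(0)`, then `t ↦ h(t)/(1-t)^{n-1}` is nonincreasing:
for `0 ≤ s ≤ t ≤ l`, `h(t)(1-t)^{1-n} ≤ h(s)(1-s)^{1-n}`. -/
theorem stmt_5 (n : ℕ) (hn : 2 ≤ n) (l : ℝ) (hl0 : 0 ≤ l) (hl : l ≤ 1)
    (h : ℝ → ℝ) (hpos : ∀ t ∈ Icc 0 l, 0 < h t)
    (hconc : ConcaveOn ℝ (Icc 0 l) (fun t => h t ^ (((n : ℝ) - 1)⁻¹)))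
    (hbd : ∀ t ∈ Icc 0 l, h t ≤ (1 - t) ^ (n - 1) * h 0) :
    ∀ s t : ℝ, 0 ≤ s → s ≤ t → t ≤ l →
      h t / (1 - t) ^ (n - 1) ≤ h s / (1 - s) ^ (n - 1) := by
  intro s t hs hst htl
  have hn1 : (1:ℝ) ≤ (n:ℝ) - 1 := by
    have : (2:ℝ) ≤ (n:ℝ) := by exact_mod_cast hn
    linarith
  have hne : ((n:ℝ) - 1) ≠ 0 := by linarith
  set e : ℝ := ((n:ℝ) - 1)⁻¹ with he
  have hcast : ((n - 1 : ℕ) : ℝ) = (n:ℝ) - 1 := by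
    have := Nat.cast_sub (R := ℝ) (by omega : 1 ≤ n)
    simpa using this
  have key : ∀ x : ℝ, 0 ≤ x → (x ^ e) ^ (n - 1) = x := by
    intro x hx
    rw [← Real.rpow_natCast (x ^ e) (n - 1), ← Real.rpow_mul hx, hcast,
      inv_mul_cancel₀ hne, Real.rpow_one]
  have hsmem : s ∈ Icc 0 l := ⟨hs, le_trans hst htl⟩
  have htmem : t ∈ Icc 0 l := ⟨le_trans hs hst, htl⟩
  have h0mem : (0:ℝ) ∈ Icc 0 l := ⟨le_refl _, hl0⟩
  have ht1 : t ≤ 1 := le_trans htl hl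
  have hs1 : (0:ℝ) ≤ 1 - s := by linarith
  rcases eq_or_lt_of_le ht1 with h1 | h1
  · -- t = 1
    have hz : (1 - t) = 0 := by rw [h1]; ring
    rw [hz, zero_pow (by omega : n - 1 ≠ 0), div_zero]
    exact div_nonneg (hpos s hsmem).le (pow_nonneg hs1 _)
  · -- t < 1
    rcases eq_or_lt_of_le (le_trans hs hst) with h0 | h0
    · rw [← h0, le_antisymm (h0 ▸ hst) hs]
    · -- 0 < t < 1
      have h1t : (0:ℝ) < 1 - t := by linarith
      set g : ℝ → ℝ := fun u => h u ^ e with hg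
      have hg0 : 0 < g 0 := Real.rpow_pos_of_pos (hpos 0 h0mem) e
      have hgs : 0 < g s := Real.rpow_pos_of_pos (hpos s hsmem) e
      have hgt : 0 < g t := Real.rpow_pos_of_pos (hpos t htmem) e
      -- bound: g t ≤ (1 - t) * g 0
      have hbdg : g t ≤ (1 - t) * g 0 := by
        calc g t ≤ ((1 - t) ^ (n - 1) * h 0) ^ e :=
              Real.rpow_le_rpow (hpos t htmem).le (hbd t htmem) (by positivity)
          _ = (1 - t) * g 0 := by
              rw [Real.mul_rpow (by positivity) (hpos 0 h0mem).le,
                ← Real.rpow_natCast (1 - t) (n - 1), ← Real.rpow_mul h1t.le, hcast,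
                mul_inv_cancel₀ hne, Real.rpow_one]
      -- concavity: g s ≥ (1 - s/t) g 0 + (s/t) g t
      have ha0 : (0:ℝ) ≤ s / t := div_nonneg hs h0.le
      have ha1 : s / t ≤ 1 := (div_le_one h0).mpr hst
      have hcv := hconc.2 h0mem htmem (by linarith : (0:ℝ) ≤ 1 - s / t) ha0
        (by ring : (1 - s / t) + s / t = 1)
      rw [smul_eq_mul, smul_eq_mul, smul_eq_mul, smul_eq_mul, mul_zero, zero_add,
        div_mul_cancel₀ _ (ne_of_gt h0)] at hcv
      -- hcv : (1 - s/t) * g 0 + (s/t) * g t ≤ g s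
      have hst' : s = (s / t) * t := by field_simp
      have main : g t * (1 - s) ≤ g s * (1 - t) := by
        nlinarith [mul_le_mul_of_nonneg_left hbdg (by linarith : (0:ℝ) ≤ 1 - s / t),
          mul_le_mul_of_nonneg_right hcv h1t.le]
      rw [div_le_div_iff₀ (pow_pos h1t _) (pow_pos (by linarith : (0:ℝ) < 1 - s) _)]
      calc h t * (1 - s) ^ (n - 1) = (g t * (1 - s)) ^ (n - 1) := by
            rw [mul_pow, key (h t) (hpos t htmem).le]
        _ ≤ (g s * (1 - t)) ^ (n - 1) :=
            pow_le_pow_left₀ (by positivity) main _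
        _ = h s * (1 - t) ^ (n - 1) := by
            rw [mul_pow, key (h s) (hpos s hsmem).le]
end

section
/- Let n ≥ 2, l ≤ 1, h:[0,l]→(0,∞) with t ↦ h(t)(1−t)^{1−n} nonincreasing, and let f:[0,l]→ℝ be absolutely continuous. Then ∫_0^l f(t)² h(t) dt ≤ (2/n) f(0)² h(0) + ((n+1)/(2n²)) ∫_0^l f'(t)² h(t) dt. -/
/-!
Along the needle, `f t = f 0 + ∫₀ᵗ f'` and Cauchy–Schwarz give
`f(t)² ≤ 2 f(0)² + 2t ∫₀ᵗ f'²`. Multiply by `h` and integrate over `(0, l]`.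
Monotonicity of `h(t) / (1 - t)^(n-1)` gives `h(t) ≤ h(s) ((1 - t) / (1 - s))^(n-1)` for
`s ≤ t`; with `s = 0` the first term is at most `2 f(0)² h(0) ∫₀ˡ (1 - t)^(n-1) ≤ (2/n) f(0)² h(0)`.
In the second term Tonelli exchanges the integrals, leaving `∫₀ˡ f'(s)² ∫ₛˡ 2t h(t) dt ds`, and
`∫ₛˡ t h(t) dt ≤ h(s) (1 - s)^(1-n) ∫ₛ¹ t (1 - t)^(n-1) dt ≤ ((n+1)/(4n²)) h(s)`.
All integrals are taken in `ℝ≥0∞`, where Tonelli needs no integrability hypotheses.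
-/

open Set MeasureTheory
open scoped ENNReal

theorem sq_integral_le_measureReal_mul_integral_sq {α : Type*} [MeasurableSpace α]
    {μ : Measure α} [IsFiniteMeasure μ] {f : α → ℝ} (hf : Integrable f μ)
    (hf2 : Integrable (fun x => f x ^ 2) μ) :
    (∫ x, f x ∂μ) ^ 2 ≤ μ.real univ * ∫ x, f x ^ 2 ∂μ := by
  have hquad (c : ℝ) :
      0 ≤ μ.real univ * (c * c) + (-2 * ∫ x, f x ∂μ) * c + ∫ x, f x ^ 2 ∂μ := by
    have hlin : Integrable (fun x => f x ^ 2 + -2 * c * f x) μ := hf2.add (hf.const_mul _)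
    have hexp : ∫ x, (f x - c) ^ 2 ∂μ = ∫ x, (f x ^ 2 + -2 * c * f x + c * c) ∂μ := by
      congr 1; ext x; ring
    rw [integral_add hlin (integrable_const _), integral_add hf2 (hf.const_mul _),
      integral_const_mul, integral_const, smul_eq_mul] at hexp
    have hnn : 0 ≤ ∫ x, (f x - c) ^ 2 ∂μ := integral_nonneg fun x => sq_nonneg _
    linarith
  have hdisc := discrim_le_zero hquad
  rw [discrim] at hdisc
  linarith

theorem ofReal_sq_le_of_sub_eq_integral {f f' : ℝ → ℝ} {a b : ℝ} (hab : a ≤ b)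
    (hf : f b - f a = ∫ s in a..b, f' s) :
    ENNReal.ofReal (f b ^ 2) ≤ ENNReal.ofReal (2 * f a ^ 2) +
      ENNReal.ofReal (2 * (b - a)) * ∫⁻ s in Ioc a b, ENNReal.ofReal (f' s ^ 2) := by
  by_cases hi : IntervalIntegrable f' volume a b
  swap
  · rw [intervalIntegral.integral_undef hi, sub_eq_zero] at hf
    rw [hf]
    exact le_add_right (ENNReal.ofReal_le_ofReal (by nlinarith [sq_nonneg (f a)]))
  rw [intervalIntegrable_iff_integrableOn_Ioc_of_le hab] at hi
  rw [intervalIntegral.integral_of_le hab] at hf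
  have hsq : 0 ≤ᵐ[volume.restrict (Ioc a b)] fun s => f' s ^ 2 :=
    ae_of_all _ fun _ => sq_nonneg _
  by_cases hi2 : IntegrableOn (fun s => f' s ^ 2) (Ioc a b)
  · have hCS := sq_integral_le_measureReal_mul_integral_sq hi hi2
    rw [measureReal_restrict_apply_univ, Real.volume_real_Ioc_of_le hab] at hCS
    rw [← ofReal_integral_eq_lintegral_ofReal hi2 hsq, ← ENNReal.ofReal_mul (by linarith),
      ← ENNReal.ofReal_add (by positivity) (mul_nonneg (by linarith) (integral_nonneg_of_ae hsq))]
    apply ENNReal.ofReal_le_ofReal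
    rw [show f b = f a + ∫ s in Ioc a b, f' s by linarith]
    nlinarith [sq_nonneg (f a - ∫ s in Ioc a b, f' s)]
  · have hab' : a < b := hab.lt_of_ne (by rintro rfl; simp at hi2)
    have hm : AEStronglyMeasurable (fun s => f' s ^ 2) (volume.restrict (Ioc a b)) :=
      hi.aestronglyMeasurable.pow 2
    rw [IntegrableOn, ← lintegral_ofReal_ne_top_iff_integrable hm hsq, not_ne_iff] at hi2
    rw [hi2, ENNReal.mul_top (by simpa using hab'), add_top]
    exact le_top

theorem lintegral_mul_lintegral_Ioc_swap {a b : ℝ} {u v : ℝ → ℝ≥0∞}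
    (hu : AEMeasurable u (volume.restrict (Ioc a b)))
    (hv : AEMeasurable v (volume.restrict (Ioc a b))) :
    ∫⁻ t in Ioc a b, u t * ∫⁻ s in Ioc a t, v s =
      ∫⁻ s in Ioc a b, v s * ∫⁻ t in Icc s b, u t := by
  set μ := volume.restrict (Ioc a b)
  set W : ℝ → ℝ → ℝ≥0∞ := fun t s =>
    {p : ℝ × ℝ | p.2 ≤ p.1}.indicator (fun p => u p.1 * v p.2) (t, s)
  have hW : AEMeasurable (Function.uncurry W) (μ.prod μ) :=
    (hu.comp_fst.mul hv.comp_snd).indicator (measurableSet_le measurable_snd measurable_fst)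
  have h_inner_s : ∀ t ∈ Ioc a b, u t * ∫⁻ s in Ioc a t, v s = ∫⁻ s, W t s ∂μ := by
    intro t ht
    have hset : Iic t ∩ Ioc a b = Ioc a t := by
      rw [inter_comm, Ioc_inter_Iic, min_eq_right ht.2]
    rw [← hset, ← Measure.restrict_restrict measurableSet_Iic,
      ← lintegral_indicator measurableSet_Iic,
      ← lintegral_const_mul'' _ (hv.indicator measurableSet_Iic)]
    congr 1; ext s
    by_cases hst : s ≤ t <;> simp [W, hst]
  have h_inner_t : ∀ s ∈ Ioc a b, v s * ∫⁻ t in Icc s b, u t = ∫⁻ t, W t s ∂μ := by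
    intro s hs
    have hset : Ici s ∩ Ioc a b = Icc s b := by
      ext x; simp only [mem_inter_iff, mem_Ici, mem_Ioc, mem_Icc]
      exact ⟨fun h => ⟨h.1, h.2.2⟩, fun h => ⟨h.1, hs.1.trans_le h.1, h.2⟩⟩
    rw [← hset, ← Measure.restrict_restrict measurableSet_Ici,
      ← lintegral_indicator measurableSet_Ici,
      ← lintegral_const_mul'' _ (hu.indicator measurableSet_Ici)]
    congr 1; ext t
    by_cases hst : s ≤ t <;> simp [W, hst, mul_comm]
  rw [setLIntegral_congr_fun measurableSet_Ioc h_inner_s, lintegral_lintegral_swap hW,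
    setLIntegral_congr_fun measurableSet_Ioc h_inner_t]

theorem integral_one_sub_pow (m : ℕ) (l : ℝ) :
    ∫ t in (0:ℝ)..l, (1 - t) ^ m = (1 - (1 - l) ^ (m + 1)) / (m + 1) := by
  simp [intervalIntegral.integral_comp_sub_left (fun x => x ^ m)]

theorem integral_mul_one_sub_pow (m : ℕ) (s l : ℝ) :
    ∫ t in s..l, t * (1 - t) ^ m =
      ((1 - s) ^ (m + 1) / (m + 1) - (1 - s) ^ (m + 2) / (m + 2)) -
        ((1 - l) ^ (m + 1) / (m + 1) - (1 - l) ^ (m + 2) / (m + 2)) := by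
  have hsub : ∫ t in s..l, t * (1 - t) ^ m =
      ∫ t in s..l, (fun x => x ^ m - x ^ (m + 1)) (1 - t) := by
    congr 1; ext t; ring
  rw [hsub, intervalIntegral.integral_comp_sub_left (fun x => x ^ m - x ^ (m + 1)),
    intervalIntegral.integral_sub (by simp) (by simp)]
  simp only [integral_pow]
  push_cast
  ring

theorem integral_one_sub_pow_le (m : ℕ) {l : ℝ} (hl : l ≤ 1) :
    ∫ t in (0:ℝ)..l, (1 - t) ^ m ≤ 1 / (m + 1) := by
  rw [integral_one_sub_pow]
  gcongr
  exact sub_le_self _ (pow_nonneg (by linarith) _)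

theorem integral_mul_one_sub_pow_le (m : ℕ) {s l : ℝ} (hs : s ≤ 1) (hl0 : 0 ≤ l)
    (hl : l ≤ 1) :
    ∫ t in s..l, t * (1 - t) ^ m ≤ (m + 2) / (4 * (m + 1) ^ 2) * (1 - s) ^ m := by
  have hm : (0 : ℝ) < m + 1 := by positivity
  have h_tail : 0 ≤ (1 - l) ^ (m + 1) / (m + 1) - (1 - l) ^ (m + 2) / (m + 2) := by
    have hpow : (1 - l) ^ (m + 2) ≤ (1 - l) ^ (m + 1) :=
      pow_le_pow_of_le_one (by linarith) (by linarith) (by omega)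
    exact sub_nonneg.2 (div_le_div₀ (by positivity) hpow (by positivity) (by linarith))
  -- `u / (m+1) - u^2 / (m+2)` is maximal at `u = (m+2) / (2(m+1))`
  have h_head : (1 - s) ^ (m + 1) / (m + 1) - (1 - s) ^ (m + 2) / (m + 2) ≤
      (m + 2) / (4 * (m + 1) ^ 2) * (1 - s) ^ m := by
    have hu : 0 ≤ (1 - s) ^ m := pow_nonneg (by linarith) _
    have key : (1 - s) / (m + 1) - (1 - s) ^ 2 / (m + 2) ≤ (m + 2) / (4 * (m + 1) ^ 2) := by
      rw [div_sub_div _ _ hm.ne' (by positivity), div_le_div_iff₀ (by positivity) (by positivity)]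
      nlinarith [sq_nonneg (2 * (m + 1) * (1 - s) - (m + 2)), hm]
    calc _ = (1 - s) ^ m * ((1 - s) / (m + 1) - (1 - s) ^ 2 / (m + 2)) := by ring
      _ ≤ (1 - s) ^ m * ((m + 2) / (4 * (m + 1) ^ 2)) := by gcongr
      _ = _ := by ring
  rw [integral_mul_one_sub_pow]
  linarith

section
variable {h : ℝ → ℝ} {m : ℕ}

theorem aemeasurable_of_antitoneOn_div_one_sub_pow {S : Set ℝ} (hS : MeasurableSet S)
    (hmono : AntitoneOn (fun t => h t / (1 - t) ^ m) S) :
    AEMeasurable h (volume.restrict S) := by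
  refine ((aemeasurable_restrict_of_antitoneOn hS hmono).mul
    (by fun_prop : Measurable fun t : ℝ => (1 - t) ^ m).aemeasurable).congr ?_
  filter_upwards [ae_restrict_of_ae (Measure.ae_ne volume 1)] with t ht
  exact div_mul_cancel₀ _ (pow_ne_zero _ (sub_ne_zero.2 ht.symm))

variable {l : ℝ}

theorem le_div_one_sub_pow_mul_of_antitoneOn
    (hmono : AntitoneOn (fun t => h t / (1 - t) ^ m) (Icc 0 l)) (hl : l ≤ 1) {s t : ℝ}
    (hs : s ∈ Icc 0 l) (ht : t ∈ Icc 0 l) (hst : s ≤ t) (ht1 : t ≠ 1) :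
    h t ≤ h s / (1 - s) ^ m * (1 - t) ^ m := by
  have : 0 < (1 - t) ^ m := pow_pos (sub_pos.2 ((ht.2.trans hl).lt_of_ne ht1)) m
  rw [← div_le_iff₀ this]
  exact hmono hs ht hst

theorem lintegral_Icc_mul_le_of_antitoneOn
    (hmono : AntitoneOn (fun t => h t / (1 - t) ^ m) (Icc 0 l)) (hl : l ≤ 1) {s : ℝ}
    (hs : s ∈ Icc 0 l) (hhs : 0 ≤ h s)
    {φ : ℝ → ℝ} (hφ : Continuous φ) (hφ0 : ∀ t ∈ Icc s l, 0 ≤ φ t) :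
    ∫⁻ t in Icc s l, ENNReal.ofReal (φ t * h t) ≤
      ENNReal.ofReal (h s / (1 - s) ^ m * ∫ t in s..l, φ t * (1 - t) ^ m) := by
  have hc : 0 ≤ h s / (1 - s) ^ m := div_nonneg hhs (pow_nonneg (by linarith [hs.2]) _)
  have hg0 : ∀ t ∈ Icc s l, 0 ≤ h s / (1 - s) ^ m * (φ t * (1 - t) ^ m) := fun t ht =>
    mul_nonneg hc (mul_nonneg (hφ0 t ht) (pow_nonneg (by linarith [ht.2]) _))
  calc ∫⁻ t in Icc s l, ENNReal.ofReal (φ t * h t)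
      ≤ ∫⁻ t in Icc s l, ENNReal.ofReal (h s / (1 - s) ^ m * (φ t * (1 - t) ^ m)) := by
        refine lintegral_mono_ae ?_
        filter_upwards [ae_restrict_mem measurableSet_Icc,
          ae_restrict_of_ae (Measure.ae_ne volume 1)] with t ht ht1
        have hts : t ∈ Icc 0 l := ⟨hs.1.trans ht.1, ht.2⟩
        refine ENNReal.ofReal_le_ofReal ?_
        calc φ t * h t ≤ φ t * (h s / (1 - s) ^ m * (1 - t) ^ m) :=
              mul_le_mul_of_nonneg_left
                (le_div_one_sub_pow_mul_of_antitoneOn hmono hl hs hts ht.1 ht1) (hφ0 t ht)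
          _ = _ := by ring
    _ = ENNReal.ofReal (∫ t in Icc s l, h s / (1 - s) ^ m * (φ t * (1 - t) ^ m)) :=
        (ofReal_integral_eq_lintegral_ofReal (by fun_prop : Continuous _).integrableOn_Icc
          ((ae_restrict_mem measurableSet_Icc).mono hg0)).symm
    _ = _ := by
        rw [integral_Icc_eq_integral_Ioc, ← intervalIntegral.integral_of_le hs.2,
          intervalIntegral.integral_const_mul]

theorem lintegral_Ioc_le_of_antitoneOn
    (hmono : AntitoneOn (fun t => h t / (1 - t) ^ m) (Icc 0 l)) (hl0 : 0 ≤ l) (hl : l ≤ 1)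
    (hh0 : 0 ≤ h 0) :
    ∫⁻ t in Ioc 0 l, ENNReal.ofReal (h t) ≤ ENNReal.ofReal (h 0 / (m + 1)) := by
  have := lintegral_Icc_mul_le_of_antitoneOn hmono hl ⟨le_rfl, hl0⟩ hh0 continuous_const
    (fun _ _ => zero_le_one)
  simp only [one_mul, sub_zero, one_pow, div_one] at this
  rw [← setLIntegral_congr Ioc_ae_eq_Icc] at this
  refine this.trans (ENNReal.ofReal_le_ofReal ?_)
  rw [div_eq_mul_one_div]
  exact mul_le_mul_of_nonneg_left (integral_one_sub_pow_le m hl) hh0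

theorem lintegral_Icc_mul_self_le_of_antitoneOn
    (hmono : AntitoneOn (fun t => h t / (1 - t) ^ m) (Icc 0 l)) (hl : l ≤ 1) {s : ℝ}
    (hs : s ∈ Icc 0 l) (hhs : 0 ≤ h s) :
    ∫⁻ t in Icc s l, ENNReal.ofReal (t * h t) ≤
      ENNReal.ofReal ((m + 2) / (4 * (m + 1) ^ 2) * h s) := by
  refine (lintegral_Icc_mul_le_of_antitoneOn hmono hl hs hhs continuous_id
    (fun t ht => hs.1.trans ht.1)).trans (ENNReal.ofReal_le_ofReal ?_)
  have hu : 0 ≤ (1 - s) ^ m := pow_nonneg (by linarith [hs.2]) _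
  calc h s / (1 - s) ^ m * ∫ t in s..l, t * (1 - t) ^ m
      ≤ h s / (1 - s) ^ m * ((m + 2) / (4 * (m + 1) ^ 2) * (1 - s) ^ m) :=
        mul_le_mul_of_nonneg_left (integral_mul_one_sub_pow_le m (by linarith [hs.2])
          (hs.1.trans hs.2) hl) (div_nonneg hhs hu)
    _ = (m + 2) / (4 * (m + 1) ^ 2) * (h s / (1 - s) ^ m * (1 - s) ^ m) := by ring
    _ ≤ _ := by
        gcongr
        rcases hu.eq_or_lt with h0 | h0
        · rw [← h0, mul_zero]; exact hhs
        · rw [div_mul_cancel₀ _ h0.ne']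

theorem lintegral_mul_lintegral_sq_le_of_antitoneOn {f' : ℝ → ℝ}
    (hmono : AntitoneOn (fun t => h t / (1 - t) ^ m) (Icc 0 l)) (hl : l ≤ 1)
    (hnn : ∀ t ∈ Icc 0 l, 0 ≤ h t) (hh : AEMeasurable h (volume.restrict (Ioc 0 l)))
    (hf' : AEMeasurable (fun s => ENNReal.ofReal (f' s ^ 2)) (volume.restrict (Ioc 0 l))) :
    ∫⁻ t in Ioc 0 l, ENNReal.ofReal (t * h t) * ∫⁻ s in Ioc 0 t, ENNReal.ofReal (f' s ^ 2) ≤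
      ENNReal.ofReal ((m + 2) / (4 * (m + 1) ^ 2)) *
        ∫⁻ s in Ioc 0 l, ENNReal.ofReal (f' s ^ 2 * h s) := by
  rw [lintegral_mul_lintegral_Ioc_swap (u := fun t => ENNReal.ofReal (t * h t))
      (aemeasurable_id.mul hh).ennreal_ofReal hf',
    ← lintegral_const_mul' _ _ ENNReal.ofReal_ne_top]
  refine setLIntegral_mono' measurableSet_Ioc fun s hs => ?_
  calc ENNReal.ofReal (f' s ^ 2) * ∫⁻ t in Icc s l, ENNReal.ofReal (t * h t)
      ≤ ENNReal.ofReal (f' s ^ 2) * ENNReal.ofReal ((m + 2) / (4 * (m + 1) ^ 2) * h s) := by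
        gcongr
        exact lintegral_Icc_mul_self_le_of_antitoneOn hmono hl (Ioc_subset_Icc_self hs)
          (hnn s (Ioc_subset_Icc_self hs))
    _ = _ := by
        rw [← ENNReal.ofReal_mul (sq_nonneg _), ← ENNReal.ofReal_mul (by positivity)]
        ring_nf

theorem lintegral_sq_mul_le_of_antitoneOn {f f' : ℝ → ℝ} (hl0 : 0 ≤ l) (hl : l ≤ 1)
    (hpos : ∀ t ∈ Icc 0 l, 0 < h t)
    (hmono : AntitoneOn (fun t => h t / (1 - t) ^ m) (Icc 0 l))
    (hFTC : ∀ t ∈ Icc 0 l, f t - f 0 = ∫ s in (0 : ℝ)..t, f' s)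
    (hg : AEMeasurable (fun t => f' t ^ 2 * h t) (volume.restrict (Ioc 0 l))) :
    ∫⁻ t in Ioc 0 l, ENNReal.ofReal (f t ^ 2 * h t) ≤
      ENNReal.ofReal (2 / (m + 1) * (f 0 ^ 2 * h 0)) +
        ENNReal.ofReal ((m + 2) / (2 * (m + 1) ^ 2)) *
          ∫⁻ t in Ioc 0 l, ENNReal.ofReal (f' t ^ 2 * h t) := by
  have hnn : ∀ t ∈ Icc 0 l, 0 ≤ h t := fun t ht => (hpos t ht).le
  have hh : AEMeasurable h (volume.restrict (Ioc 0 l)) :=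
    (aemeasurable_of_antitoneOn_div_one_sub_pow measurableSet_Icc hmono).mono_measure
      (Measure.restrict_mono Ioc_subset_Icc_self le_rfl)
  have hf' : AEMeasurable (fun s => ENNReal.ofReal (f' s ^ 2)) (volume.restrict (Ioc 0 l)) := by
    refine ((hg.mul hh.inv).congr ?_).ennreal_ofReal
    filter_upwards [ae_restrict_mem measurableSet_Ioc] with t ht
    exact mul_inv_cancel_right₀ (hpos t (Ioc_subset_Icc_self ht)).ne' _
  have hpointwise : ∀ t ∈ Ioc 0 l, ENNReal.ofReal (f t ^ 2 * h t) ≤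
      ENNReal.ofReal (2 * f 0 ^ 2) * ENNReal.ofReal (h t) +
        2 * (ENNReal.ofReal (t * h t) * ∫⁻ s in Ioc 0 t, ENNReal.ofReal (f' s ^ 2)) := by
    intro t ht
    have hF := ofReal_sq_le_of_sub_eq_integral ht.1.le (hFTC t (Ioc_subset_Icc_self ht))
    have h2t : ENNReal.ofReal (2 * (t - 0)) = 2 * ENNReal.ofReal t := by
      rw [sub_zero, ENNReal.ofReal_mul zero_le_two, ENNReal.ofReal_ofNat]
    rw [h2t] at hF
    rw [ENNReal.ofReal_mul (sq_nonneg _), ENNReal.ofReal_mul ht.1.le]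
    calc _ ≤ _ := mul_le_mul_left hF (ENNReal.ofReal (h t))
      _ = _ := by ring
  calc ∫⁻ t in Ioc 0 l, ENNReal.ofReal (f t ^ 2 * h t)
      ≤ ∫⁻ t in Ioc 0 l, (ENNReal.ofReal (2 * f 0 ^ 2) * ENNReal.ofReal (h t) +
          2 * (ENNReal.ofReal (t * h t) * ∫⁻ s in Ioc 0 t, ENNReal.ofReal (f' s ^ 2))) :=
        setLIntegral_mono' measurableSet_Ioc hpointwise
    _ = ENNReal.ofReal (2 * f 0 ^ 2) * (∫⁻ t in Ioc 0 l, ENNReal.ofReal (h t)) +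
          2 * ∫⁻ t in Ioc 0 l, ENNReal.ofReal (t * h t) *
            ∫⁻ s in Ioc 0 t, ENNReal.ofReal (f' s ^ 2) := by
        rw [lintegral_add_left' (hh.ennreal_ofReal.const_mul _),
          lintegral_const_mul' _ _ ENNReal.ofReal_ne_top, lintegral_const_mul' _ _ (by simp)]
    _ ≤ ENNReal.ofReal (2 * f 0 ^ 2) * ENNReal.ofReal (h 0 / (m + 1)) +
          2 * (ENNReal.ofReal ((m + 2) / (4 * (m + 1) ^ 2)) *
            ∫⁻ t in Ioc 0 l, ENNReal.ofReal (f' t ^ 2 * h t)) := by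
        gcongr _ * ?_ + 2 * ?_
        · exact lintegral_Ioc_le_of_antitoneOn hmono hl0 hl (hnn 0 ⟨le_rfl, hl0⟩)
        · exact lintegral_mul_lintegral_sq_le_of_antitoneOn hmono hl hnn hh hf'
    _ = _ := by
        rw [← ENNReal.ofReal_mul (by positivity), ← mul_assoc, ← ENNReal.ofReal_ofNat 2,
          ← ENNReal.ofReal_mul zero_le_two]
        congr 1
        · congr 1; ring
        · congr 2; field_simp; ring

end

/-- the one-dimensional trace Poincaré inequality along a needle:
if `n ≥ 2`, `0 ≤ l ≤ 1`, `h : [0,l] → (0,∞)` with `t ↦ h(t)(1-t)^{1-n}` nonincreasing,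
and `f` is absolutely continuous (with derivative `f'` in the sense of the fundamental
theorem of calculus), then
`∫_0^l f² h ≤ (2/n) f(0)² h(0) + ((n+1)/(2n²)) ∫_0^l (f')² h`. -/
theorem stmt_8 (n : ℕ) (hn : 2 ≤ n) (l : ℝ) (hl0 : 0 ≤ l) (hl : l ≤ 1)
    (h f f' : ℝ → ℝ) (hpos : ∀ t ∈ Icc 0 l, 0 < h t)
    (hmono : AntitoneOn (fun t => h t / (1 - t) ^ (n - 1)) (Icc 0 l))
    (hFTC : ∀ t ∈ Icc 0 l, f t - f 0 = ∫ s in (0 : ℝ)..t, f' s)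
    (hint1 : IntervalIntegrable (fun t => f t ^ 2 * h t) volume 0 l)
    (hint2 : IntervalIntegrable (fun t => f' t ^ 2 * h t) volume 0 l) :
    (∫ t in (0 : ℝ)..l, f t ^ 2 * h t) ≤
      2 / n * (f 0 ^ 2 * h 0) +
        ((n : ℝ) + 1) / (2 * (n : ℝ) ^ 2) * ∫ t in (0 : ℝ)..l, f' t ^ 2 * h t := by
  obtain ⟨m, rfl⟩ : ∃ m, n = m + 1 := ⟨n - 1, by omega⟩
  rw [Nat.add_sub_cancel] at hmono
  rw [intervalIntegrable_iff_integrableOn_Ioc_of_le hl0] at hint1 hint2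
  have hnn (u : ℝ → ℝ) : 0 ≤ᵐ[volume.restrict (Ioc 0 l)] fun t => u t ^ 2 * h t :=
    (ae_restrict_mem measurableSet_Ioc).mono fun t ht =>
      mul_nonneg (sq_nonneg _) (hpos t (Ioc_subset_Icc_self ht)).le
  have hh0 := hpos 0 ⟨le_rfl, hl0⟩
  have hI0 := integral_nonneg_of_ae (hnn f')
  have key := lintegral_sq_mul_le_of_antitoneOn hl0 hl hpos hmono hFTC hint2.aemeasurable
  rw [← ofReal_integral_eq_lintegral_ofReal hint1 (hnn f),
    ← ofReal_integral_eq_lintegral_ofReal hint2 (hnn f'), ← ENNReal.ofReal_mul (by positivity),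
    ← ENNReal.ofReal_add (by positivity) (by positivity),
    ENNReal.ofReal_le_ofReal_iff (by positivity)] at key
  rw [intervalIntegral.integral_of_le hl0, intervalIntegral.integral_of_le hl0]
  convert key using 3 <;> push_cast <;> ring
end

section
/- Let u be a harmonic function on an open subset of a Riemannian n-manifold, n ≥ 2. Then the improved Kato inequality |∇²u|² ≥ (n/(n−1)) |∇|∇u||² holds pointwise wherever ∇u ≠ 0. -/
open Finset

/-- the improved Kato inequality for harmonic functions, in its
pointwise linear-algebra form.  At a point where `∇u ≠ 0`, the Hessian of a harmonic
function is a symmetric matrix `H` with `trace H = 0` (harmonicity), the unit vector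
`v = ∇u/|∇u|` satisfies `∑ vᵢ² = 1`, `|∇|∇u||² = |H v|²`, and `|∇²u|² = ∑ Hᵢⱼ²`.
Then `|∇²u|² ≥ (n/(n-1)) |∇|∇u||²`. -/
theorem stmt_15 (n : ℕ) (hn : 2 ≤ n) (H : Matrix (Fin n) (Fin n) ℝ)
    (hsymm : H.IsSymm) (htr : H.trace = 0)
    (v : Fin n → ℝ) (hv : ∑ i, v i ^ 2 = 1) :
    ((n : ℝ) / ((n : ℝ) - 1)) * ∑ i, (∑ j, H i j * v j) ^ 2 ≤ ∑ i, ∑ j, H i j ^ 2 := by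
  have hsym : ∀ i j, H j i = H i j := fun i j => hsymm.apply i j
  have htr' : ∑ i, H i i = 0 := by simpa [Matrix.trace, Matrix.diag] using htr
  obtain ⟨w, hw⟩ : ∃ w : Fin n → ℝ, ∀ i, w i = ∑ j, H i j * v j := ⟨_, fun _ => rfl⟩
  obtain ⟨a, ha⟩ : ∃ a : ℝ, a = ∑ i, w i * v i := ⟨_, rfl⟩
  obtain ⟨b, hb⟩ : ∃ b : Fin n → ℝ, ∀ i, b i = w i - a * v i := ⟨_, fun _ => rfl⟩
  obtain ⟨B, hB⟩ : ∃ B : ℝ, B = ∑ i, b i ^ 2 := ⟨_, rfl⟩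
  obtain ⟨K, hK⟩ : ∃ K : Fin n → Fin n → ℝ,
      ∀ i j, K i j = H i j - (a * v i * v j + v i * b j + b i * v j) := ⟨_, fun _ _ => rfl⟩
  obtain ⟨S, hS⟩ : ∃ S : ℝ, S = ∑ i, ∑ j, K i j ^ 2 := ⟨_, rfl⟩
  have hvv : ∑ i, v i * v i = 1 := by simpa [sq] using hv
  have hbb : ∑ i, b i * b i = B := by
    rw [hB]; exact Finset.sum_congr rfl fun i _ => (sq (b i)).symm
  have hbv : ∑ i, b i * v i = 0 := by
    have e : ∑ i, b i * v i = (∑ i, w i * v i) - a * (∑ i, v i * v i) := by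
      rw [Finset.mul_sum, ← Finset.sum_sub_distrib]
      exact Finset.sum_congr rfl fun i _ => by rw [hb i]; ring
    rw [e, hvv, ← ha]; ring
  have hvb : ∑ i, v i * b i = 0 := by
    rw [← hbv]; exact Finset.sum_congr rfl fun i _ => mul_comm _ _
  -- column sums of H against v
  have hcol : ∀ j, ∑ i, H i j * v i = w j := by
    intro j
    rw [hw j]
    exact Finset.sum_congr rfl fun i _ => by rw [hsym i j]
  -- K annihilates v on both sides
  have hKv : ∀ i, ∑ j, K i j * v j = 0 := by
    intro i
    have e : ∑ j, K i j * v j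
        = (∑ j, H i j * v j) - (a * v i + b i) * (∑ j, v j * v j) - v i * (∑ j, b j * v j) := by
      rw [Finset.mul_sum, Finset.mul_sum, ← Finset.sum_sub_distrib, ← Finset.sum_sub_distrib]
      exact Finset.sum_congr rfl fun j _ => by rw [hK i j, hb j]; ring
    rw [e, hvv, hbv, ← hw i, hb i]; ring
  have hvK : ∀ j, ∑ i, K i j * v i = 0 := by
    intro j
    have e : ∑ i, K i j * v i
        = (∑ i, H i j * v i) - (a * v j + b j) * (∑ i, v i * v i) - v j * (∑ i, b i * v i) := by
      rw [Finset.mul_sum, Finset.mul_sum, ← Finset.sum_sub_distrib, ← Finset.sum_sub_distrib]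
      exact Finset.sum_congr rfl fun i _ => by rw [hK i j, hb i]; ring
    rw [e, hcol j, hvv, hbv, hb j]; ring
  -- cross terms vanish
  have hKvv : ∑ i, ∑ j, K i j * (v i * v j) = 0 := by
    refine Finset.sum_eq_zero fun i _ => ?_
    have e : ∑ j, K i j * (v i * v j) = v i * ∑ j, K i j * v j := by
      rw [Finset.mul_sum]; exact Finset.sum_congr rfl fun j _ => by ring
    rw [e, hKv i, mul_zero]
  have hKbv : ∑ i, ∑ j, K i j * (b i * v j) = 0 := by
    refine Finset.sum_eq_zero fun i _ => ?_
    have e : ∑ j, K i j * (b i * v j) = b i * ∑ j, K i j * v j := by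
      rw [Finset.mul_sum]; exact Finset.sum_congr rfl fun j _ => by ring
    rw [e, hKv i, mul_zero]
  have hKvb : ∑ i, ∑ j, K i j * (v i * b j) = 0 := by
    rw [Finset.sum_comm]
    refine Finset.sum_eq_zero fun j _ => ?_
    have e : ∑ i, K i j * (v i * b j) = b j * ∑ i, K i j * v i := by
      rw [Finset.mul_sum]; exact Finset.sum_congr rfl fun i _ => by ring
    rw [e, hvK j, mul_zero]
  -- squared norm of the rank-≤2 part
  have hM : ∑ i, ∑ j, (a * v i * v j + v i * b j + b i * v j) ^ 2 = a ^ 2 + 2 * B := by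
    have inner : ∀ i, ∑ j, (a * v i * v j + v i * b j + b i * v j) ^ 2
        = a ^ 2 * v i ^ 2 + B * v i ^ 2 + b i ^ 2 + 2 * a * (v i * b i) := by
      intro i
      have e : ∑ j, (a * v i * v j + v i * b j + b i * v j) ^ 2
          = (a ^ 2 * v i ^ 2 + b i ^ 2 + 2 * a * (v i * b i)) * (∑ j, v j * v j)
            + v i ^ 2 * (∑ j, b j * b j)
            + (2 * a * v i ^ 2 + 2 * (v i * b i)) * (∑ j, v j * b j) := by
        rw [Finset.mul_sum, Finset.mul_sum, Finset.mul_sum, ← Finset.sum_add_distrib,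
          ← Finset.sum_add_distrib]
        exact Finset.sum_congr rfl fun j _ => by ring
      rw [e, hvv, hbb, hvb]; ring
    have e2 : ∑ i, (a ^ 2 * v i ^ 2 + B * v i ^ 2 + b i ^ 2 + 2 * a * (v i * b i))
        = (a ^ 2 + B) * (∑ i, v i ^ 2) + (∑ i, b i ^ 2) + 2 * a * (∑ i, v i * b i) := by
      rw [Finset.mul_sum, Finset.mul_sum, ← Finset.sum_add_distrib, ← Finset.sum_add_distrib]
      exact Finset.sum_congr rfl fun i _ => by ring
    rw [Finset.sum_congr rfl fun i _ => inner i, e2, hv, hvb, ← hB]; ring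
  -- Pythagoras
  have hHsum : ∑ i, ∑ j, H i j ^ 2 = S + (a ^ 2 + 2 * B) := by
    have inner : ∀ i, ∑ j, H i j ^ 2
        = ∑ j, K i j ^ 2 + (2 * a) * (∑ j, K i j * (v i * v j))
          + 2 * (∑ j, K i j * (v i * b j)) + 2 * (∑ j, K i j * (b i * v j))
          + ∑ j, (a * v i * v j + v i * b j + b i * v j) ^ 2 := by
      intro i
      rw [Finset.mul_sum, Finset.mul_sum, Finset.mul_sum, ← Finset.sum_add_distrib,
        ← Finset.sum_add_distrib, ← Finset.sum_add_distrib, ← Finset.sum_add_distrib]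
      exact Finset.sum_congr rfl fun j _ => by rw [hK i j]; ring
    rw [Finset.sum_congr rfl fun i _ => inner i]
    rw [Finset.sum_add_distrib, Finset.sum_add_distrib, Finset.sum_add_distrib,
      Finset.sum_add_distrib, ← Finset.mul_sum, ← Finset.mul_sum, ← Finset.mul_sum,
      hKvv, hKvb, hKbv, hM, ← hS]
    ring
  -- trace of K
  have hKtr : ∑ i, K i i = -a := by
    have e : ∑ i, K i i
        = (∑ i, H i i) - a * (∑ i, v i * v i) - 2 * (∑ i, b i * v i) := by
      rw [Finset.mul_sum, Finset.mul_sum, ← Finset.sum_sub_distrib, ← Finset.sum_sub_distrib]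
      exact Finset.sum_congr rfl fun i _ => by rw [hK i i]; ring
    rw [e, htr', hvv, hbv]; ring
  -- Cauchy–Schwarz with the projection P = I - v vᵀ
  obtain ⟨P, hP⟩ : ∃ P : Fin n → Fin n → ℝ,
      ∀ i j, P i j = (if i = j then (1 : ℝ) else 0) - v i * v j := ⟨_, fun _ _ => rfl⟩
  have hKP : ∑ i, ∑ j, K i j * P i j = -a := by
    have inner : ∀ i, ∑ j, K i j * P i j = K i i - ∑ j, K i j * (v i * v j) := by
      intro i
      have e : ∑ j, K i j * P i j
          = (∑ j, K i j * (if i = j then (1 : ℝ) else 0)) - ∑ j, K i j * (v i * v j) := by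
        rw [← Finset.sum_sub_distrib]
        exact Finset.sum_congr rfl fun j _ => by rw [hP i j]; ring
      rw [e]
      congr 1
      simp
    rw [Finset.sum_congr rfl fun i _ => inner i, Finset.sum_sub_distrib, hKtr, hKvv]; ring
  have hPP : ∑ i, ∑ j, P i j ^ 2 = (n : ℝ) - 1 := by
    have inner : ∀ i, ∑ j, P i j ^ 2 = 1 - v i ^ 2 := by
      intro i
      have e : ∑ j, P i j ^ 2
          = (∑ j, (if i = j then (1 : ℝ) else 0) * (if i = j then (1 : ℝ) else 0))
            - 2 * v i * (∑ j, (if i = j then (1 : ℝ) else 0) * v j)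
            + v i ^ 2 * (∑ j, v j * v j) := by
        rw [Finset.mul_sum, Finset.mul_sum, ← Finset.sum_sub_distrib, ← Finset.sum_add_distrib]
        exact Finset.sum_congr rfl fun j _ => by rw [hP i j]; ring
      rw [e, hvv]
      simp
      ring
    rw [Finset.sum_congr rfl fun i _ => inner i, Finset.sum_sub_distrib, hv]
    simp
  have hcs := Finset.sum_mul_sq_le_sq_mul_sq Finset.univ
    (fun p : Fin n × Fin n => K p.1 p.2) (fun p : Fin n × Fin n => P p.1 p.2)
  simp only [Fintype.sum_prod_type] at hcs
  rw [hKP, hPP, ← hS] at hcs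
  have ha2 : a ^ 2 ≤ S * ((n : ℝ) - 1) := by
    calc a ^ 2 = (-a) ^ 2 := by ring
    _ ≤ S * ((n : ℝ) - 1) := hcs
  -- norm of w
  have hw2 : ∑ i, w i ^ 2 = a ^ 2 + B := by
    have e : ∑ i, w i ^ 2
        = (∑ i, b i ^ 2) + 2 * a * (∑ i, b i * v i) + a ^ 2 * (∑ i, v i * v i) := by
      rw [Finset.mul_sum, Finset.mul_sum, ← Finset.sum_add_distrib, ← Finset.sum_add_distrib]
      exact Finset.sum_congr rfl fun i _ => by rw [hb i]; ring
    rw [e, hbv, hvv, ← hB]; ring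
  have hB0 : 0 ≤ B := by rw [hB]; positivity
  have hS0 : 0 ≤ S := by
    rw [hS]
    exact Finset.sum_nonneg fun i _ => Finset.sum_nonneg fun j _ => sq_nonneg _
  have hgw : ∑ i, (∑ j, H i j * v j) ^ 2 = ∑ i, w i ^ 2 :=
    Finset.sum_congr rfl fun i _ => by rw [hw i]
  rw [hgw, hw2, hHsum]
  have hm : (2 : ℝ) ≤ (n : ℝ) := by exact_mod_cast hn
  have hm1 : (0 : ℝ) < (n : ℝ) - 1 := by linarith
  rw [div_mul_eq_mul_div, div_le_iff₀ hm1]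
  nlinarith [mul_nonneg (by linarith : (0 : ℝ) ≤ (n : ℝ) - 2) hB0]
end
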